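/- arXiv:2412.07297 — 5 statements merged into one kernel-verified Lean document; each statement's English description precedes it below -/
import Mathlib

section
/- If a family ℱ of 3-graphs does not satisfy a palette 𝒫 (i.e., no member of ℱ satisfies 𝒫), then π_{ee}(ℱ) ≥ Λ^{ee}_𝒫. -/
open Finset

/-- A 3-uniform hypergraph: a finite vertex set (of naturals) together with a set of
3-element subsets of it as edges. -/
structure ThreeGraph where
  verts : Finset ℕ
  edges : Finset (Finset ℕ)
  edge_sub : ∀ e ∈ edges, e ⊆ verts
  edge_card : ∀ e ∈ edges, e.card = 3

/-- `F` occurs as a subhypergraph of `H`. -/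
def IsSubhypergraph (F H : ThreeGraph) : Prop :=
  ∃ f : ℕ → ℕ, Set.InjOn f ↑F.verts ∧ (∀ v ∈ F.verts, f v ∈ H.verts) ∧
    ∀ e ∈ F.edges, e.image f ∈ H.edges

noncomputable section

/-- Number of triples `(x,y,z) ∈ X × Y × Z` with `{x,y,z}` an edge of `H`. -/
def eVVV (H : ThreeGraph) (X Y Z : Finset ℕ) : ℕ :=
  ((X ×ˢ Y ×ˢ Z).filter fun p => ({p.1, p.2.1, p.2.2} : Finset ℕ) ∈ H.edges).card

/-- `H` is `(d,η,▽)`-dense. -/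
def IsDenseVVV (H : ThreeGraph) (d η : ℝ) : Prop :=
  ∀ X Y Z : Finset ℕ, X ⊆ H.verts → Y ⊆ H.verts → Z ⊆ H.verts →
    (eVVV H X Y Z : ℝ) ≥ d * X.card * Y.card * Z.card - η * (H.verts.card : ℝ) ^ 3

/-- Number of ordered triples `(x,y,z)` with `x ∈ X`, `{y,z} ∈ P` and `{x,y,z}` an edge. -/
def eEV (H : ThreeGraph) (X : Finset ℕ) (P : Finset (Finset ℕ)) : ℕ :=
  ((X ×ˢ H.verts ×ˢ H.verts).filter fun p =>
    ({p.2.1, p.2.2} : Finset ℕ) ∈ P ∧ ({p.1, p.2.1, p.2.2} : Finset ℕ) ∈ H.edges).card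

/-- `H` is `(d,η,e↦v)`-dense. -/
def IsDenseEV (H : ThreeGraph) (d η : ℝ) : Prop :=
  ∀ (X : Finset ℕ) (P : Finset (Finset ℕ)), X ⊆ H.verts →
    (∀ p ∈ P, p ⊆ H.verts ∧ p.card = 2) →
    (eEV H X P : ℝ) ≥ d * X.card * P.card - η * (H.verts.card : ℝ) ^ 3

/-- `K_{ee}(P,Q)`: ordered triples `(x,y,z)` with `{x,y} ∈ P` and `{y,z} ∈ Q`. -/
def KEE (H : ThreeGraph) (P Q : Finset (Finset ℕ)) : Finset (ℕ × ℕ × ℕ) :=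
  (H.verts ×ˢ H.verts ×ˢ H.verts).filter fun p =>
    ({p.1, p.2.1} : Finset ℕ) ∈ P ∧ ({p.2.1, p.2.2} : Finset ℕ) ∈ Q

/-- Number of triples in `K_{ee}(P,Q)` forming an edge of `H`. -/
def eEE (H : ThreeGraph) (P Q : Finset (Finset ℕ)) : ℕ :=
  ((KEE H P Q).filter fun p => ({p.1, p.2.1, p.2.2} : Finset ℕ) ∈ H.edges).card

/-- `H` is `(d,η,ee)`-dense. -/
def IsDenseEE (H : ThreeGraph) (d η : ℝ) : Prop :=
  ∀ P Q : Finset (Finset ℕ),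
    (∀ p ∈ P, p ⊆ H.verts ∧ p.card = 2) → (∀ q ∈ Q, q ⊆ H.verts ∧ q.card = 2) →
    (eEE H P Q : ℝ) ≥ d * (KEE H P Q).card - η * (H.verts.card : ℝ) ^ 3

/-- The uniform Turán density `π_▽(𝓕)` of a family `𝓕` of 3-graphs. -/
def piVVV (𝓕 : Set ThreeGraph) : ℝ :=
  sSup {d : ℝ | 0 ≤ d ∧ d ≤ 1 ∧ ∀ η : ℝ, 0 < η → ∀ n : ℕ,
    ∃ H : ThreeGraph, n ≤ H.verts.card ∧ (∀ F ∈ 𝓕, ¬ IsSubhypergraph F H) ∧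
      IsDenseVVV H d η}

/-- The uniform Turán density `π_{e↦v}(𝓕)` of a family `𝓕` of 3-graphs. -/
def piEV (𝓕 : Set ThreeGraph) : ℝ :=
  sSup {d : ℝ | 0 ≤ d ∧ d ≤ 1 ∧ ∀ η : ℝ, 0 < η → ∀ n : ℕ,
    ∃ H : ThreeGraph, n ≤ H.verts.card ∧ (∀ F ∈ 𝓕, ¬ IsSubhypergraph F H) ∧
      IsDenseEV H d η}

/-- The uniform Turán density `π_{ee}(𝓕)` of a family `𝓕` of 3-graphs. -/
def piEE (𝓕 : Set ThreeGraph) : ℝ :=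
  sSup {d : ℝ | 0 ≤ d ∧ d ≤ 1 ∧ ∀ η : ℝ, 0 < η → ∀ n : ℕ,
    ∃ H : ThreeGraph, n ≤ H.verts.card ∧ (∀ F ∈ 𝓕, ¬ IsSubhypergraph F H) ∧
      IsDenseEE H d η}

/-- A palette: a finite set of ordered triples of natural numbers (colours). -/
abbrev Palette := Finset (ℕ × ℕ × ℕ)

/-- The set of colours `Φ(𝒫)` of a palette. -/
def palColours (P : Palette) : Finset ℕ :=
  P.image (·.1) ∪ P.image (·.2.1) ∪ P.image (·.2.2)

/-- A weighting of a palette: nonnegative weights on the colours summing to 1. -/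
def IsWeighting (P : Palette) (x : ℕ → ℝ) : Prop :=
  (∀ a ∈ palColours P, 0 ≤ x a) ∧ ∑ a ∈ palColours P, x a = 1

/-- `λ^▽_𝒫(x) = Σ_{(a,b,c) ∈ 𝒫} x_a x_b x_c`. -/
def lamVVV (P : Palette) (x : ℕ → ℝ) : ℝ :=
  ∑ p ∈ P, x p.1 * x p.2.1 * x p.2.2

/-- The palette Lagrangian `Λ^▽_𝒫`. -/
def LambdaVVV (P : Palette) : ℝ :=
  sSup {l : ℝ | ∃ x : ℕ → ℝ, IsWeighting P x ∧ l = lamVVV P x}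

/-- The ordered degree Lagrangian `λ^a_𝒫(x)`. -/
def lamDeg (P : Palette) (a : ℕ) (x : ℕ → ℝ) : ℝ :=
  min (min (∑ p ∈ P.filter (fun p => p.1 = a), x p.2.1 * x p.2.2)
           (∑ p ∈ P.filter (fun p => p.2.1 = a), x p.1 * x p.2.2))
      (∑ p ∈ P.filter (fun p => p.2.2 = a), x p.1 * x p.2.1)

/-- `λ^{e↦v}_𝒫(x)`: minimum of `λ^a_𝒫(x)` over colours `a` with positive weight. -/
def lamEV (P : Palette) (x : ℕ → ℝ) : ℝ :=
  sInf {l : ℝ | ∃ a ∈ palColours P, 0 < x a ∧ l = lamDeg P a x}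

/-- The palette Lagrangian `Λ^{e↦v}_𝒫`. -/
def LambdaEV (P : Palette) : ℝ :=
  sSup {l : ℝ | ∃ x : ℕ → ℝ, IsWeighting P x ∧ l = lamEV P x}

/-- The ordered codegree Lagrangian `λ^{a,b}_𝒫(x)`. -/
def lamCodeg (P : Palette) (a b : ℕ) (x : ℕ → ℝ) : ℝ :=
  min (min (min (∑ p ∈ P.filter (fun p => p.1 = a ∧ p.2.1 = b), x p.2.2)
                (∑ p ∈ P.filter (fun p => p.1 = b ∧ p.2.1 = a), x p.2.2))
           (min (∑ p ∈ P.filter (fun p => p.1 = a ∧ p.2.2 = b), x p.2.1)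
                (∑ p ∈ P.filter (fun p => p.1 = b ∧ p.2.2 = a), x p.2.1)))
      (min (∑ p ∈ P.filter (fun p => p.2.1 = a ∧ p.2.2 = b), x p.1)
           (∑ p ∈ P.filter (fun p => p.2.1 = b ∧ p.2.2 = a), x p.1))

/-- `λ^{ee}_𝒫(x)`: minimum of `λ^{a,b}_𝒫(x)` over colours `a,b` with positive weight. -/
def lamEE (P : Palette) (x : ℕ → ℝ) : ℝ :=
  sInf {l : ℝ | ∃ a ∈ palColours P, ∃ b ∈ palColours P, 0 < x a * x b ∧ l = lamCodeg P a b x}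

/-- The palette Lagrangian `Λ^{ee}_𝒫`. -/
def LambdaEE (P : Palette) : ℝ :=
  sSup {l : ℝ | ∃ x : ℕ → ℝ, IsWeighting P x ∧ l = lamEE P x}

/-- A 3-graph `H` satisfies a palette `P`: there is an ordering of the vertices (an
injection `ord` into `ℕ`) and a colouring `φ` of the pairs of vertices with colours in
`Φ(P)` such that the ordered shadow of every edge is a triple of the palette. -/
def Satisfies (H : ThreeGraph) (P : Palette) : Prop :=
  ∃ (ord : ℕ → ℕ) (φ : Finset ℕ → ℕ),
    Set.InjOn ord ↑H.verts ∧
    (∀ u ∈ H.verts, ∀ v ∈ H.verts, u ≠ v → φ {u, v} ∈ palColours P) ∧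
    ∀ u v w : ℕ, ({u, v, w} : Finset ℕ) ∈ H.edges →
      ord u < ord v → ord v < ord w →
      (φ {u, v}, φ {v, w}, φ {u, w}) ∈ P

/-- Delete a set of edges from a 3-graph. -/
def ThreeGraph.deleteEdges (H : ThreeGraph) (R : Finset (Finset ℕ)) : ThreeGraph where
  verts := H.verts
  edges := H.edges \ R
  edge_sub := fun e he => H.edge_sub e (Finset.mem_sdiff.mp he).1
  edge_card := fun e he => H.edge_card e (Finset.mem_sdiff.mp he).1

/-- `H` α-almost satisfies `P`: one can remove at most `α·|V(H)|³` edges so that the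
resulting 3-graph satisfies `P`. -/
def AlmostSatisfies (H : ThreeGraph) (P : Palette) (α : ℝ) : Prop :=
  ∃ R ⊆ H.edges, (R.card : ℝ) ≤ α * (H.verts.card : ℝ) ^ 3 ∧
    Satisfies (H.deleteEdges R) P

/-- The Lagrange polynomial `λ_F(x) = 3! Σ_{e ∈ E(F)} Π_{v ∈ e} x_v` of a 3-graph. -/
def lagrangePoly (F : ThreeGraph) (x : ℕ → ℝ) : ℝ :=
  6 * ∑ e ∈ F.edges, ∏ v ∈ e, x v

/-- The Lagrangian `Λ_F` of a 3-graph: the supremum of the Lagrange polynomial over the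
standard simplex on the vertices. -/
def lagrangian (F : ThreeGraph) : ℝ :=
  sSup {l : ℝ | ∃ x : ℕ → ℝ, (∀ v ∈ F.verts, 0 ≤ x v ∧ x v ≤ 1) ∧
    (∑ v ∈ F.verts, x v = 1) ∧ l = lagrangePoly F x}

end

/-!
Colour the pairs of `[m]` independently with law `x` and keep the triples whose ordered
pattern lies in `P`. This 3-graph satisfies `P`, and so do its subhypergraphs, so it contains
no member of `𝓕`. In a cherry `u - v - w` the colour of the top `{u, w}` is independent of the
legs, and given leg colours `a, b` it makes `{u, v, w}` an edge with probability at least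
`λ^{a,b}_P(x) ≥ λ^{ee}_P(x)`. Fix a middle vertex `v` and its neighbourhoods `S, T` in the two
pair sets of the density condition. Given the legs, the edge count minus these conditional
probabilities is then a sum of independent, bounded, mean-zero terms, one per top. An
exponential moment bound makes a deviation of `ε m²` exponentially unlikely in `m²`. A union
bound over the `m 4^m` choices of `(v, S, T)` then gives a colouring that is
`(λ^{ee}_P(x), η, ee)`-dense.
-/

open Finset Function Real

section ProductWeight

variable {ι κ : Type*} [Fintype ι] [DecidableEq ι]

def piWeight (x : κ → ℝ) (g : ι → κ) : ℝ := ∏ i, x (g i)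

def piExpect (A : Finset κ) (x : κ → ℝ) (f : (ι → κ) → ℝ) : ℝ :=
  ∑ g ∈ Fintype.piFinset fun _ : ι => A, piWeight x g * f g

variable {A : Finset κ} {x : κ → ℝ}

lemma piWeight_nonneg (hx : ∀ a ∈ A, 0 ≤ x a) {g : ι → κ}
    (hg : g ∈ Fintype.piFinset fun _ : ι => A) : 0 ≤ piWeight x g :=
  prod_nonneg fun i _ => hx _ (Fintype.mem_piFinset.mp hg i)

lemma pos_of_piWeight_pos (hx : ∀ a ∈ A, 0 ≤ x a) {g : ι → κ}
    (hg : g ∈ Fintype.piFinset fun _ : ι => A) (hpos : 0 < piWeight x g) (i : ι) : 0 < x (g i) :=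
  (hx _ (Fintype.mem_piFinset.mp hg i)).lt_of_ne fun h =>
    hpos.ne' (prod_eq_zero (mem_univ i) h.symm)

lemma sum_piWeight (hx : ∑ a ∈ A, x a = 1) :
    ∑ g ∈ Fintype.piFinset (fun _ : ι => A), piWeight x g = 1 := by
  simp only [piWeight, ← Finset.prod_univ_sum, hx, prod_const_one]

lemma piExpect_mono (hx : ∀ a ∈ A, 0 ≤ x a) {f f' : (ι → κ) → ℝ}
    (h : ∀ g ∈ Fintype.piFinset fun _ : ι => A, f g ≤ f' g) :
    piExpect A x f ≤ piExpect A x f' :=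
  sum_le_sum fun g hg => mul_le_mul_of_nonneg_left (h g hg) (piWeight_nonneg hx hg)

lemma piExpect_const_mul (b : ℝ) (f : (ι → κ) → ℝ) :
    piExpect A x (fun g => b * f g) = b * piExpect A x f := by
  simp only [piExpect, mul_sum]
  exact sum_congr rfl fun g _ => by ring

lemma piExpect_eq_sum_update (hx : ∑ a ∈ A, x a = 1) (i : ι) (f : (ι → κ) → ℝ) :
    piExpect A x f = ∑ c ∈ A, x c * piExpect A x (fun g => f (update g i c)) := by
  set Ω := Fintype.piFinset fun _ : ι => A
  let rest : (ι → κ) → ℝ := fun g => ∏ j ∈ univ.erase i, x (g j)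
  have hrest : ∀ g c, rest (update g i c) = rest g := fun g c =>
    prod_congr rfl fun j hj => by rw [update_of_ne (ne_of_mem_erase hj)]
  have hw : ∀ g, piWeight x g = x (g i) * rest g := fun g =>
    (mul_prod_erase univ _ (mem_univ i)).symm
  have hupd : ∀ g ∈ Ω, ∀ c ∈ A, update g i c ∈ Ω := fun g hg c hc =>
    Fintype.mem_piFinset.mpr fun j => by
      rcases eq_or_ne j i with rfl | hj
      · simpa using hc
      · simpa [hj] using Fintype.mem_piFinset.mp hg j
  calc piExpect A x f = ∑ p ∈ Ω ×ˢ A, x (p.1 i) * rest p.1 * f p.1 * x p.2 := by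
        simp only [Ω, piExpect, sum_product, ← mul_sum, hx, mul_one, hw]
    _ = ∑ p ∈ A ×ˢ Ω, x p.1 * (x (p.2 i) * rest p.2 * f (update p.2 i p.1)) := by
        refine sum_nbij' (fun p => (p.1 i, update p.1 i p.2)) (fun p => (update p.2 i p.1, p.2 i))
          ?_ ?_ ?_ ?_ ?_
        · rintro ⟨g, c⟩ h
          rw [mem_product] at h ⊢
          exact ⟨Fintype.mem_piFinset.mp h.1 i, hupd g h.1 c h.2⟩
        · rintro ⟨c, g⟩ h
          rw [mem_product] at h ⊢
          exact ⟨hupd g h.2 c h.1, Fintype.mem_piFinset.mp h.2 i⟩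
        · rintro ⟨g, c⟩ _
          simp
        · rintro ⟨c, g⟩ _
          simp
        · rintro ⟨g, c⟩ _
          simp only [update_self, update_idem, update_eq_self, hrest]
          ring
    _ = ∑ c ∈ A, x c * piExpect A x (fun g => f (update g i c)) := by
        simp only [Ω, piExpect, sum_product, hw, mul_sum]

lemma piExpect_prod_le_pow (hx₀ : ∀ a ∈ A, 0 ≤ x a) (hx₁ : ∑ a ∈ A, x a = 1)
    {F : ι → (ι → κ) → ℝ} {B : ℝ} (hB : 0 ≤ B) (s : Finset ι)
    (hF0 : ∀ i ∈ s, ∀ g, 0 ≤ F i g)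
    (hFupdate : ∀ i ∈ s, ∀ j ∈ s, i ≠ j → ∀ g c, F i (update g j c) = F i g)
    (hFavg : ∀ i ∈ s, ∀ g ∈ Fintype.piFinset (fun _ : ι => A),
      ∑ c ∈ A, x c * F i (update g i c) ≤ B) :
    piExpect A x (fun g => ∏ i ∈ s, F i g) ≤ B ^ #s := by
  induction s using Finset.induction_on with
  | empty => simp [piExpect, sum_piWeight hx₁]
  | @insert i s hi ih =>
    have hs : ∀ j ∈ s, j ∈ insert i s := fun j => mem_insert_of_mem
    have hrest : ∀ g c, ∏ j ∈ s, F j (update g i c) = ∏ j ∈ s, F j g := fun g c =>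
      prod_congr rfl fun j hj =>
        hFupdate j (hs j hj) i (mem_insert_self i s) (ne_of_mem_of_not_mem hj hi) g c
    calc piExpect A x (fun g => ∏ j ∈ insert i s, F j g)
        = piExpect A x (fun g => (∑ c ∈ A, x c * F i (update g i c)) * ∏ j ∈ s, F j g) := by
          simp only [prod_insert hi]
          rw [piExpect_eq_sum_update hx₁ i]
          simp only [piExpect, hrest, mul_sum, sum_mul]
          rw [sum_comm]
          exact sum_congr rfl fun g _ => sum_congr rfl fun c _ => by ring
      _ ≤ piExpect A x (fun g => B * ∏ j ∈ s, F j g) :=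
          piExpect_mono hx₀ fun g hg => mul_le_mul_of_nonneg_right
            (hFavg i (mem_insert_self i s) g hg) (prod_nonneg fun j hj => hF0 j (hs j hj) g)
      _ ≤ B ^ #(insert i s) := by
          rw [piExpect_const_mul, card_insert_of_notMem hi, pow_succ']
          exact mul_le_mul_of_nonneg_left
            (ih (fun j hj => hF0 j (hs j hj)) (fun j hj k hk => hFupdate j (hs j hj) k (hs k hk))
              fun j hj => hFavg j (hs j hj)) hB

lemma sum_piWeight_filter_le (hx : ∀ a ∈ A, 0 ≤ x a) (f : (ι → κ) → ℝ) {a t : ℝ}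
    (ht : 0 ≤ t) :
    ∑ g ∈ Fintype.piFinset (fun _ : ι => A) with a ≤ f g, piWeight x g
      ≤ exp (-(t * a)) * piExpect A x (fun g => exp (t * f g)) := by
  rw [← piExpect_const_mul, piExpect, sum_filter]
  refine sum_le_sum fun g hg => ?_
  split_ifs with hfg
  · rw [← exp_add]
    refine le_mul_of_one_le_right (piWeight_nonneg hx hg) (one_le_exp ?_)
    nlinarith
  · exact mul_nonneg (piWeight_nonneg hx hg) (by positivity)

lemma exists_piWeight_pos_forall_not (hx₀ : ∀ a ∈ A, 0 ≤ x a) (hx₁ : ∑ a ∈ A, x a = 1)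
    {J : Type*} (J₀ : Finset J) (E : J → (ι → κ) → Prop) [∀ j, DecidablePred (E j)] {δ : ℝ}
    (hE : ∀ j ∈ J₀, ∑ g ∈ Fintype.piFinset (fun _ : ι => A) with E j g, piWeight x g ≤ δ)
    (hδ : #J₀ * δ < 1) :
    ∃ g ∈ Fintype.piFinset (fun _ : ι => A), 0 < piWeight x g ∧ ∀ j ∈ J₀, ¬ E j g := by
  by_contra! hbad
  refine hδ.not_ge ?_
  calc (1 : ℝ) = ∑ g ∈ Fintype.piFinset (fun _ : ι => A), piWeight x g := (sum_piWeight hx₁).symm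
    _ ≤ ∑ g ∈ Fintype.piFinset (fun _ : ι => A), ∑ j ∈ J₀, if E j g then piWeight x g else 0 := by
        refine sum_le_sum fun g hg => ?_
        have hterm : ∀ j ∈ J₀, 0 ≤ if E j g then piWeight x g else 0 := fun j _ => by
          split_ifs
          exacts [piWeight_nonneg hx₀ hg, le_rfl]
        rcases (piWeight_nonneg hx₀ hg).lt_or_eq with hpos | hzero
        · obtain ⟨j, hj, hEj⟩ := hbad g hg hpos
          exact (if_pos hEj).symm.le.trans (single_le_sum hterm hj)
        · exact hzero.symm.le.trans (sum_nonneg hterm)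
    _ = ∑ j ∈ J₀, ∑ g ∈ Fintype.piFinset (fun _ : ι => A) with E j g, piWeight x g := by
        rw [sum_comm]
        exact sum_congr rfl fun j _ => (sum_filter _ _).symm
    _ ≤ #J₀ * δ := by
        simpa using sum_le_card_nsmul J₀ _ δ hE

end ProductWeight

/-- A weak form of Hoeffding's lemma. -/
lemma sum_mul_exp_le_exp_sq {κ : Type*} {A : Finset κ} {x : κ → ℝ}
    (hx₀ : ∀ a ∈ A, 0 ≤ x a) (hx₁ : ∑ a ∈ A, x a = 1) {ζ : κ → ℝ} {t M : ℝ}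
    (hmean : ∑ c ∈ A, x c * ζ c = 0) (hζ : ∀ c ∈ A, |ζ c| ≤ M) (ht : |t| * M ≤ 1) :
    ∑ c ∈ A, x c * exp (t * ζ c) ≤ exp ((t * M) ^ 2) := by
  have hterm : ∀ c ∈ A, x c * exp (t * ζ c) ≤ x c + t * (x c * ζ c) + (t * M) ^ 2 * x c := by
    intro c hc
    have hu : |t * ζ c| ≤ |t| * M := by
      rw [abs_mul]; exact mul_le_mul_of_nonneg_left (hζ c hc) (abs_nonneg t)
    have hexp := (abs_le.mp (abs_exp_sub_one_sub_id_le (hu.trans ht))).2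
    have hsq : (t * ζ c) ^ 2 ≤ (t * M) ^ 2 := by
      calc (t * ζ c) ^ 2 ≤ (|t| * M) ^ 2 := sq_le_sq' (abs_le.mp hu).1 (abs_le.mp hu).2
        _ = (t * M) ^ 2 := by rw [mul_pow, mul_pow, sq_abs]
    nlinarith [hx₀ c hc]
  calc ∑ c ∈ A, x c * exp (t * ζ c)
      ≤ ∑ c ∈ A, (x c + t * (x c * ζ c) + (t * M) ^ 2 * x c) := sum_le_sum hterm
    _ = (t * M) ^ 2 + 1 := by
        rw [sum_add_distrib, sum_add_distrib, ← mul_sum, ← mul_sum, hmean, hx₁]; ring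
    _ ≤ exp ((t * M) ^ 2) := add_one_le_exp _

section Palette

variable {P : Palette} {x : ℕ → ℝ}

lemma fst_mem_palColours {p : ℕ × ℕ × ℕ} (hp : p ∈ P) : p.1 ∈ palColours P := by
  simp only [palColours, mem_union, mem_image]
  exact Or.inl (Or.inl ⟨p, hp, rfl⟩)

lemma snd_mem_palColours {p : ℕ × ℕ × ℕ} (hp : p ∈ P) : p.2.1 ∈ palColours P := by
  simp only [palColours, mem_union, mem_image]
  exact Or.inl (Or.inr ⟨p, hp, rfl⟩)

lemma thd_mem_palColours {p : ℕ × ℕ × ℕ} (hp : p ∈ P) : p.2.2 ∈ palColours P := by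
  simp only [palColours, mem_union, mem_image]
  exact Or.inr ⟨p, hp, rfl⟩

lemma lamCodeg_nonneg (hx : ∀ a ∈ palColours P, 0 ≤ x a) (a b : ℕ) : 0 ≤ lamCodeg P a b x := by
  have h : ∀ (Q : ℕ × ℕ × ℕ → Prop) [DecidablePred Q] (pr : ℕ × ℕ × ℕ → ℕ),
      (∀ p ∈ P, pr p ∈ palColours P) → 0 ≤ ∑ p ∈ P with Q p, x (pr p) :=
    fun Q _ pr hpr => sum_nonneg fun p hp => hx _ (hpr p (mem_filter.mp hp).1)
  unfold lamCodeg
  refine le_min (le_min (le_min ?_ ?_) (le_min ?_ ?_)) (le_min ?_ ?_)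
  all_goals first
    | exact h _ _ fun p => thd_mem_palColours
    | exact h _ _ fun p => snd_mem_palColours
    | exact h _ _ fun p => fst_mem_palColours

lemma lamEE_nonneg (hx : IsWeighting P x) : 0 ≤ lamEE P x :=
  Real.sInf_nonneg <| by
    rintro l ⟨a, -, b, -, -, rfl⟩
    exact lamCodeg_nonneg hx.1 a b

lemma lamEE_le_lamCodeg (hx : IsWeighting P x) {a b : ℕ} (ha : a ∈ palColours P)
    (hb : b ∈ palColours P) (hab : 0 < x a * x b) : lamEE P x ≤ lamCodeg P a b x := by
  refine csInf_le ⟨0, ?_⟩ ⟨a, ha, b, hb, hab, rfl⟩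
  rintro l ⟨a, -, b, -, -, rfl⟩
  exact lamCodeg_nonneg hx.1 a b

/-- `e` parametrises a line of `ℕ³` and `pr` is the coordinate along it. -/
lemma sum_filter_eq_sum_mul_indicator (e : ℕ → ℕ × ℕ × ℕ) (pr : ℕ × ℕ × ℕ → ℕ)
    (hpre : ∀ c, pr (e c) = c) (hpr : ∀ p ∈ P, pr p ∈ palColours P) (Q : ℕ × ℕ × ℕ → Prop)
    [DecidablePred Q] (hQ : ∀ p, Q p ↔ e (pr p) = p) :
    ∑ p ∈ P with Q p, x (pr p) = ∑ c ∈ palColours P, x c * if e c ∈ P then 1 else 0 := by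
  simp only [mul_ite, mul_one, mul_zero, ← sum_filter]
  refine sum_nbij' pr e ?_ ?_ (fun p hp => ?_) (fun c _ => hpre c) (fun _ _ => rfl)
  · intro p hp
    rw [mem_filter] at hp ⊢
    exact ⟨hpr p hp.1, ((hQ p).mp hp.2).symm ▸ hp.1⟩
  · intro c hc
    rw [mem_filter] at hc ⊢
    exact ⟨hc.2, (hQ _).mpr (by rw [hpre])⟩
  · rw [mem_filter] at hp
    exact (hQ p).mp hp.2

lemma sum_mul_indicator_thd (a b : ℕ) :
    ∑ c ∈ palColours P, x c * (if (a, b, c) ∈ P then 1 else 0) =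
      ∑ p ∈ P with p.1 = a ∧ p.2.1 = b, x p.2.2 :=
  (sum_filter_eq_sum_mul_indicator (fun c => (a, b, c)) (·.2.2) (fun _ => rfl)
    (fun _ => thd_mem_palColours) _ fun ⟨p₁, p₂, p₃⟩ => by simp [eq_comm]).symm

lemma sum_mul_indicator_snd (a b : ℕ) :
    ∑ c ∈ palColours P, x c * (if (a, c, b) ∈ P then 1 else 0) =
      ∑ p ∈ P with p.1 = a ∧ p.2.2 = b, x p.2.1 :=
  (sum_filter_eq_sum_mul_indicator (fun c => (a, c, b)) (·.2.1) (fun _ => rfl)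
    (fun _ => snd_mem_palColours) _ fun ⟨p₁, p₂, p₃⟩ => by simp [eq_comm]).symm

lemma sum_mul_indicator_fst (a b : ℕ) :
    ∑ c ∈ palColours P, x c * (if (c, a, b) ∈ P then 1 else 0) =
      ∑ p ∈ P with p.2.1 = a ∧ p.2.2 = b, x p.1 :=
  (sum_filter_eq_sum_mul_indicator (fun c => (c, a, b)) (·.1) (fun _ => rfl)
    (fun _ => fst_mem_palColours) _ fun ⟨p₁, p₂, p₃⟩ => by simp [eq_comm]).symm

end Palette

lemma Satisfies.of_isSubhypergraph {P : Palette} {F H : ThreeGraph} (hFH : IsSubhypergraph F H)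
    (hH : Satisfies H P) : Satisfies F P := by
  obtain ⟨f, hinj, hmaps, hedges⟩ := hFH
  obtain ⟨ord, φ, hord, hφ, hP⟩ := hH
  have himage : ∀ u v : ℕ, ({u, v} : Finset ℕ).image f = {f u, f v} := fun u v => by
    simp [image_insert]
  refine ⟨ord ∘ f, fun e => φ (e.image f), hord.comp hinj hmaps, ?_, ?_⟩
  · intro u hu v hv huv
    simp only [himage]
    exact hφ _ (hmaps u hu) _ (hmaps v hv) fun h => huv (hinj hu hv h)
  · intro u v w he huv hvw
    have he' : ({f u, f v, f w} : Finset ℕ) ∈ H.edges := by simpa [image_insert] using hedges _ he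
    simpa only [himage] using hP _ _ _ he' huv hvw

open Classical in
noncomputable def paletteGraph (P : Palette) (m : ℕ) (κ : Finset ℕ → ℕ) : ThreeGraph where
  verts := range m
  edges := ((range m).powersetCard 3).filter fun e =>
    ∀ i j k, e = {i, j, k} → i < j → j < k → (κ {i, j}, κ {j, k}, κ {i, k}) ∈ P
  edge_sub _ he := (mem_powersetCard.mp (mem_filter.mp he).1).1
  edge_card _ he := (mem_powersetCard.mp (mem_filter.mp he).1).2

section PaletteGraph

variable {P : Palette} {m : ℕ} {κ : Finset ℕ → ℕ}

@[simp]
lemma paletteGraph_verts : (paletteGraph P m κ).verts = range m := rfl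

lemma mem_paletteGraph_edges {e : Finset ℕ} :
    e ∈ (paletteGraph P m κ).edges ↔ e ∈ (range m).powersetCard 3 ∧
      ∀ i j k, e = {i, j, k} → i < j → j < k → (κ {i, j}, κ {j, k}, κ {i, k}) ∈ P := by
  classical
  exact mem_filter

lemma satisfies_paletteGraph (hκ : ∀ u < m, ∀ v < m, u ≠ v → κ {u, v} ∈ palColours P) :
    Satisfies (paletteGraph P m κ) P :=
  ⟨id, κ, Set.injOn_id _, fun u hu v hv => by
    simp only [paletteGraph_verts, mem_range] at hu hv
    exact hκ u hu v hv,
    fun u v w he huv hvw => (mem_paletteGraph_edges.mp he).2 u v w rfl huv hvw⟩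

lemma eq_of_triple_eq {i j k i' j' k' : ℕ} (hij : i < j) (hjk : j < k) (hij' : i' < j')
    (hjk' : j' < k') (h : ({i, j, k} : Finset ℕ) = {i', j', k'}) : i = i' ∧ j = j' ∧ k = k' := by
  have hmem : ∀ t, (t = i ∨ t = j ∨ t = k) ↔ (t = i' ∨ t = j' ∨ t = k') := fun t => by
    simpa using Finset.ext_iff.mp h t
  have := (hmem i).mp (by simp); have := (hmem j).mp (by simp); have := (hmem k).mp (by simp)
  have := (hmem i').mpr (by simp); have := (hmem j').mpr (by simp); have := (hmem k').mpr (by simp)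
  omega

lemma mem_paletteGraph_edges_of_lt {i j k : ℕ} (hij : i < j) (hjk : j < k) (hk : k < m) :
    {i, j, k} ∈ (paletteGraph P m κ).edges ↔ (κ {i, j}, κ {j, k}, κ {i, k}) ∈ P := by
  refine ⟨fun h => (mem_paletteGraph_edges.mp h).2 i j k rfl hij hjk,
    fun h => mem_paletteGraph_edges.mpr ⟨?_, ?_⟩⟩
  · refine mem_powersetCard.mpr ⟨fun t ht => ?_, card_eq_three.mpr ⟨i, j, k, ?_, ?_, ?_, rfl⟩⟩
    · simp only [mem_insert, mem_singleton] at ht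
      rw [mem_range]
      omega
    all_goals omega
  · intro i' j' k' he hij' hjk'
    obtain ⟨rfl, rfl, rfl⟩ := eq_of_triple_eq hij' hjk' hij hjk he.symm
    exact h

/-- The ordered pattern of a triangle `{u, v, w}` whose pairs `{u, v}`, `{v, w}`, `{u, w}` have
colours `a`, `b`, `c`. -/
def cherryPattern (u v w a b c : ℕ) : ℕ × ℕ × ℕ :=
  if u < v ∧ v < w then (a, b, c)
  else if w < v ∧ v < u then (b, a, c)
  else if u < w ∧ w < v then (c, b, a)
  else if v < u ∧ u < w then (a, c, b)
  else if v < w ∧ w < u then (b, c, a)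
  else (c, a, b)

section CherryPattern

variable {u v w : ℕ} (a b c : ℕ)

lemma cherryPattern_uvw (h₁ : u < v) (h₂ : v < w) : cherryPattern u v w a b c = (a, b, c) := by
  unfold cherryPattern; split_ifs <;> first | rfl | omega

lemma cherryPattern_wvu (h₁ : w < v) (h₂ : v < u) : cherryPattern u v w a b c = (b, a, c) := by
  unfold cherryPattern; split_ifs <;> first | rfl | omega

lemma cherryPattern_uwv (h₁ : u < w) (h₂ : w < v) : cherryPattern u v w a b c = (c, b, a) := by
  unfold cherryPattern; split_ifs <;> first | rfl | omega

lemma cherryPattern_vuw (h₁ : v < u) (h₂ : u < w) : cherryPattern u v w a b c = (a, c, b) := by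
  unfold cherryPattern; split_ifs <;> first | rfl | omega

lemma cherryPattern_vwu (h₁ : v < w) (h₂ : w < u) : cherryPattern u v w a b c = (b, c, a) := by
  unfold cherryPattern; split_ifs <;> first | rfl | omega

lemma cherryPattern_wuv (h₁ : w < u) (h₂ : u < v) : cherryPattern u v w a b c = (c, a, b) := by
  unfold cherryPattern; split_ifs <;> first | rfl | omega

end CherryPattern

lemma mem_paletteGraph_edges_iff {u v w : ℕ} (huv : u ≠ v) (hvw : v ≠ w) (huw : u ≠ w)
    (hu : u < m) (hv : v < m) (hw : w < m) :
    {u, v, w} ∈ (paletteGraph P m κ).edges ↔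
      cherryPattern u v w (κ {u, v}) (κ {v, w}) (κ {u, w}) ∈ P := by
  rcases huv.lt_or_gt with h₁ | h₁ <;> rcases hvw.lt_or_gt with h₂ | h₂ <;>
    rcases huw.lt_or_gt with h₃ | h₃
  · rw [cherryPattern_uvw _ _ _ h₁ h₂, mem_paletteGraph_edges_of_lt h₁ h₂ hw]
  · omega
  · rw [cherryPattern_uwv _ _ _ h₃ h₂, pair_comm v w, mem_paletteGraph_edges_of_lt h₃ h₂ hv]
  · rw [cherryPattern_wuv _ _ _ h₃ h₁, pair_comm v w, insert_comm u w,
      mem_paletteGraph_edges_of_lt h₃ h₁ hv, pair_comm w u]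
  · rw [cherryPattern_vuw _ _ _ h₁ h₃, insert_comm u v, mem_paletteGraph_edges_of_lt h₁ h₃ hw,
      pair_comm v u]
  · rw [cherryPattern_vwu _ _ _ h₂ h₃, insert_comm u v, pair_comm u w,
      mem_paletteGraph_edges_of_lt h₂ h₃ hu, pair_comm v u, pair_comm w u]
  · omega
  · rw [cherryPattern_wvu _ _ _ h₂ h₁, insert_comm u v, pair_comm u w, insert_comm v w,
      mem_paletteGraph_edges_of_lt h₂ h₁ hu, pair_comm w v, pair_comm v u, pair_comm w u]

end PaletteGraph

/-- For leg colours `a = κ{u,v}` and `b = κ{v,w}`: the probability that an `x`-random colour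
of the top `{u, w}` puts the pattern of `{u, v, w}` into `P`. -/
noncomputable def closeProb (P : Palette) (x : ℕ → ℝ) (u v w a b : ℕ) : ℝ :=
  ∑ c ∈ palColours P, x c * if cherryPattern u v w a b c ∈ P then 1 else 0

/-- The edge indicator of `{u, v, w}` minus its conditional expectation given the legs. -/
noncomputable def cherryDev (P : Palette) (x : ℕ → ℝ) (κ : Finset ℕ → ℕ) (u v w : ℕ) : ℝ :=
  (if cherryPattern u v w (κ {u, v}) (κ {v, w}) (κ {u, w}) ∈ P then 1 else 0) -
    closeProb P x u v w (κ {u, v}) (κ {v, w})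

section CloseProb

variable {P : Palette} {x : ℕ → ℝ} {u v w : ℕ}

lemma closeProb_nonneg (hx : IsWeighting P x) (a b : ℕ) : 0 ≤ closeProb P x u v w a b :=
  sum_nonneg fun c hc => mul_nonneg (hx.1 c hc) (by split_ifs <;> norm_num)

lemma closeProb_le_one (hx : IsWeighting P x) (a b : ℕ) : closeProb P x u v w a b ≤ 1 :=
  hx.2 ▸ sum_le_sum fun c hc => mul_le_of_le_one_right (hx.1 c hc) (by split_ifs <;> norm_num)

lemma lamCodeg_le_closeProb (huv : u ≠ v) (hvw : v ≠ w) (huw : u ≠ w) (a b : ℕ) :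
    lamCodeg P a b x ≤ closeProb P x u v w a b := by
  unfold closeProb
  rcases huv.lt_or_gt with h₁ | h₁ <;> rcases hvw.lt_or_gt with h₂ | h₂ <;>
    rcases huw.lt_or_gt with h₃ | h₃
  · simp only [cherryPattern_uvw _ _ _ h₁ h₂, sum_mul_indicator_thd]
    simp [lamCodeg]
  · omega
  · simp only [cherryPattern_uwv _ _ _ h₃ h₂, sum_mul_indicator_fst]
    simp [lamCodeg]
  · simp only [cherryPattern_wuv _ _ _ h₃ h₁, sum_mul_indicator_fst]
    simp [lamCodeg]
  · simp only [cherryPattern_vuw _ _ _ h₁ h₃, sum_mul_indicator_snd]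
    simp [lamCodeg]
  · simp only [cherryPattern_vwu _ _ _ h₂ h₃, sum_mul_indicator_snd]
    simp [lamCodeg]
  · omega
  · simp only [cherryPattern_wvu _ _ _ h₂ h₁, sum_mul_indicator_thd]
    simp [lamCodeg]

lemma lamEE_le_one (hx : IsWeighting P x) : lamEE P x ≤ 1 := by
  obtain ⟨a, ha, hxa⟩ : ∃ a ∈ palColours P, 0 < x a := by
    by_contra! h
    have := hx.2 ▸ sum_nonpos h
    norm_num at this
  calc lamEE P x ≤ lamCodeg P a a x := lamEE_le_lamCodeg hx ha ha (mul_pos hxa hxa)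
    _ ≤ closeProb P x 0 1 2 a a :=
        lamCodeg_le_closeProb (by norm_num) (by norm_num) (by norm_num) _ _
    _ ≤ 1 := closeProb_le_one hx _ _

variable {κ : Finset ℕ → ℕ}

lemma abs_cherryDev_le_one (hx : IsWeighting P x) : |cherryDev P x κ u v w| ≤ 1 := by
  have h₀ := closeProb_nonneg hx (u := u) (v := v) (w := w) (κ {u, v}) (κ {v, w})
  have h₁ := closeProb_le_one hx (u := u) (v := v) (w := w) (κ {u, v}) (κ {v, w})
  rw [cherryDev, abs_le]
  constructor <;> split_ifs <;> linarith

lemma cherryDev_update_of_ne {s : Finset ℕ} (h₁ : s ≠ {u, v}) (h₂ : s ≠ {v, w})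
    (h₃ : s ≠ {u, w}) (c : ℕ) : cherryDev P x (update κ s c) u v w = cherryDev P x κ u v w := by
  simp only [cherryDev, update_of_ne h₁.symm, update_of_ne h₂.symm, update_of_ne h₃.symm]

lemma sum_mul_cherryDev_update (hx : IsWeighting P x) (huv : u ≠ v) (hvw : v ≠ w) :
    ∑ c ∈ palColours P, x c * cherryDev P x (update κ {u, w} c) u v w = 0 := by
  have hv : v ∉ ({u, w} : Finset ℕ) := by simp [huv.symm, hvw]
  have h₁ : ({u, v} : Finset ℕ) ≠ {u, w} := fun h => hv (h ▸ by simp)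
  have h₂ : ({v, w} : Finset ℕ) ≠ {u, w} := fun h => hv (h ▸ by simp)
  have hupdate : ∀ c, cherryDev P x (update κ {u, w} c) u v w =
      (if cherryPattern u v w (κ {u, v}) (κ {v, w}) c ∈ P then 1 else 0) -
        closeProb P x u v w (κ {u, v}) (κ {v, w}) := fun c => by
    simp only [cherryDev, update_self, update_of_ne h₁, update_of_ne h₂]
  simp only [hupdate, mul_sub, sum_sub_distrib, ← sum_mul, hx.2, one_mul, closeProb, sub_self]

end CloseProb

abbrev RangePair (m : ℕ) := ↥((range m).powersetCard 2)

/-- The pair colouring encoded by `g`; its value `0` off the pairs of `range m` is never used. -/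
def pairColouring {m : ℕ} (g : RangePair m → ℕ) (e : Finset ℕ) : ℕ :=
  if h : e ∈ (range m).powersetCard 2 then g ⟨e, h⟩ else 0

/-- The cherries `u - v - w` with middle `v`, `u ∈ S` and `w ∈ T`, recorded as `(u, w)`. -/
def cherries (v : ℕ) (S T : Finset ℕ) : Finset (ℕ × ℕ) :=
  (S ×ˢ T).filter fun q => q.1 ≠ q.2 ∧ q.1 ≠ v ∧ q.2 ≠ v

noncomputable def devSum (P : Palette) (x : ℕ → ℝ) {m : ℕ} (g : RangePair m → ℕ) (v : ℕ)
    (S T : Finset ℕ) : ℝ :=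
  ∑ q ∈ cherries v S T, cherryDev P x (pairColouring g) q.1 v q.2

noncomputable def topDev (P : Palette) (x : ℕ → ℝ) {m : ℕ} (g : RangePair m → ℕ) (v : ℕ)
    (S T : Finset ℕ) (e : RangePair m) : ℝ :=
  ∑ q ∈ cherries v S T with ({q.1, q.2} : Finset ℕ) = e.1, cherryDev P x (pairColouring g) q.1 v q.2

section RandomColouring

variable {P : Palette} {x : ℕ → ℝ} {m : ℕ}

lemma pair_mem_powersetCard {u v : ℕ} (hu : u < m) (hv : v < m) (huv : u ≠ v) :
    {u, v} ∈ (range m).powersetCard 2 :=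
  mem_powersetCard.mpr ⟨by simp [insert_subset_iff, hu, hv], card_pair huv⟩

lemma pairColouring_of_mem (g : RangePair m → ℕ) {e : Finset ℕ}
    (he : e ∈ (range m).powersetCard 2) : pairColouring g e = g ⟨e, he⟩ :=
  dif_pos he

lemma pairColouring_update (g : RangePair m → ℕ) (e : RangePair m) (c : ℕ) :
    pairColouring (update g e c) = update (pairColouring g) e.1 c := by
  funext s
  by_cases hs : s ∈ (range m).powersetCard 2
  · simp only [pairColouring_of_mem _ hs, update_apply, Subtype.ext_iff]
  · have : s ≠ e.1 := fun h => hs (h ▸ e.2)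
    simp [pairColouring, hs, this]

lemma card_filter_pair_eq_le_two {v : ℕ} {S T e : Finset ℕ} (he : e.card = 2) :
    #{q ∈ cherries v S T | ({q.1, q.2} : Finset ℕ) = e} ≤ 2 := by
  refine he ▸ card_le_card_of_injOn (·.1) (fun q hq => ?_) fun q hq q' hq' h => ?_
  · simp only [coe_filter, Set.mem_ofPred_eq] at hq
    simp [← hq.2]
  · simp only [coe_filter, Set.mem_ofPred_eq, cherries, mem_filter] at hq hq' h
    have h₂ : q.2 ∈ ({q'.1, q'.2} : Finset ℕ) := hq'.2 ▸ hq.2 ▸ by simp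
    rw [mem_insert, mem_singleton] at h₂
    exact Prod.ext h (by omega)

lemma devSum_eq_sum_topDev (g : RangePair m → ℕ) {v : ℕ} {S T : Finset ℕ} (hS : S ⊆ range m)
    (hT : T ⊆ range m) :
    devSum P x g v S T =
      ∑ e ∈ univ.filter (fun e : RangePair m => v ∉ e.1), topDev P x g v S T e := by
  rw [devSum, ← sum_fiberwise_of_maps_to (g := fun q : ℕ × ℕ => ({q.1, q.2} : Finset ℕ))
    (t := (univ.filter fun e : RangePair m => v ∉ e.1).map (Embedding.subtype _)), sum_map]
  · rfl
  · intro q hq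
    simp only [cherries, mem_filter, mem_product] at hq
    simp only [mem_map, mem_filter, mem_univ, true_and, Embedding.subtype_apply, Subtype.exists,
      exists_and_right, exists_eq_right]
    exact ⟨pair_mem_powersetCard (mem_range.mp (hS hq.1.1)) (mem_range.mp (hT hq.1.2)) hq.2.1,
      by simp [hq.2.2.1.symm, hq.2.2.2.symm]⟩

lemma topDev_update_of_ne (g : RangePair m → ℕ) {v : ℕ} (S T : Finset ℕ) {e e' : RangePair m}
    (hve' : v ∉ e'.1) (hne : e' ≠ e) (c : ℕ) :
    topDev P x (update g e' c) v S T e = topDev P x g v S T e := by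
  refine sum_congr rfl fun q hq => ?_
  rw [pairColouring_update]
  refine cherryDev_update_of_ne (fun h => hve' (by rw [h]; simp))
    (fun h => hve' (by rw [h]; simp)) ?_ c
  rw [(mem_filter.mp hq).2]
  exact fun h => hne (Subtype.ext h)

lemma sum_mul_exp_topDev_update_le (hx : IsWeighting P x) (g : RangePair m → ℕ) {v : ℕ}
    (S T : Finset ℕ) (e : RangePair m) {t : ℝ} (ht : |t| ≤ 1 / 2) :
    ∑ c ∈ palColours P, x c * exp (t * topDev P x (update g e c) v S T e) ≤ exp ((t * 2) ^ 2) := by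
  refine sum_mul_exp_le_exp_sq hx.1 hx.2 ?_ (fun c _ => ?_) (by linarith)
  · simp only [topDev, mul_sum]
    rw [sum_comm]
    refine sum_eq_zero fun q hq => ?_
    obtain ⟨hq, htop⟩ := mem_filter.mp hq
    obtain ⟨-, huw, huv, hwv⟩ := (mem_filter.mp hq)
    simp only [pairColouring_update, ← htop]
    exact sum_mul_cherryDev_update hx huv (Ne.symm hwv)
  · calc |topDev P x (update g e c) v S T e|
        ≤ ∑ q ∈ cherries v S T with ({q.1, q.2} : Finset ℕ) = e.1, (1 : ℝ) :=
          (abs_sum_le_sum_abs _ _).trans (sum_le_sum fun q _ => abs_cherryDev_le_one hx)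
      _ ≤ 2 := by
          rw [sum_const, nsmul_one]
          exact_mod_cast card_filter_pair_eq_le_two (mem_powersetCard.mp e.2).2

lemma card_rangePair_le : Fintype.card (RangePair m) ≤ m ^ 2 := by
  simpa using Nat.choose_le_pow m 2

lemma sum_piWeight_devSum_le (hx : IsWeighting P x) {v : ℕ} {S T : Finset ℕ}
    (hS : S ⊆ range m) (hT : T ⊆ range m) {ε : ℝ} (hε₀ : 0 ≤ ε) (hε₄ : ε ≤ 4) :
    ∑ g ∈ Fintype.piFinset (fun _ : RangePair m => palColours P) with
      ε * m ^ 2 ≤ -devSum P x g v S T, piWeight x g ≤ exp (-(ε ^ 2 / 16 * m ^ 2)) := by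
  -- `t = ε / 8` optimises the exponential moment bound below.
  set t := ε / 8 with ht_def
  set tops := univ.filter fun e : RangePair m => v ∉ e.1
  have ht : |-t| ≤ 1 / 2 := by rw [abs_neg, abs_of_nonneg (by positivity)]; linarith
  have hsplit : ∀ g, devSum P x g v S T = ∑ e ∈ tops, topDev P x g v S T e :=
    fun g => devSum_eq_sum_topDev g hS hT
  have hcard : (#tops : ℝ) ≤ m ^ 2 := by
    exact_mod_cast (card_filter_le _ _).trans card_rangePair_le
  have hmgf : piExpect (palColours P) x (fun g => exp (t * -devSum P x g v S T)) ≤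
      exp ((t * 2) ^ 2 * m ^ 2) :=
    calc piExpect (palColours P) x (fun g => exp (t * -devSum P x g v S T))
        = piExpect (palColours P) x (fun g => ∏ e ∈ tops, exp (-t * topDev P x g v S T e)) := by
          congr 1
          funext g
          rw [hsplit g, ← exp_sum, ← sum_neg_distrib, mul_sum]
          simp only [neg_mul, mul_neg]
      _ ≤ exp ((-t * 2) ^ 2) ^ #tops :=
          piExpect_prod_le_pow hx.1 hx.2 (exp_pos _).le tops (fun _ _ _ => (exp_pos _).le)
            (fun e _ e' he' hne g c => by
              rw [topDev_update_of_ne g S T (mem_filter.mp he').2 (Ne.symm hne) c])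
            fun e _ g _ => sum_mul_exp_topDev_update_le hx g S T e ht
      _ = exp ((t * 2) ^ 2 * #tops) := by rw [← exp_nat_mul]; ring_nf
      _ ≤ exp ((t * 2) ^ 2 * m ^ 2) :=
          exp_le_exp.mpr (mul_le_mul_of_nonneg_left hcard (sq_nonneg _))
  calc _ ≤ exp (-(t * (ε * m ^ 2))) *
          piExpect (palColours P) x (fun g => exp (t * -devSum P x g v S T)) :=
        sum_piWeight_filter_le hx.1 _ (by positivity)
    _ ≤ exp (-(t * (ε * m ^ 2))) * exp ((t * 2) ^ 2 * m ^ 2) :=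
        mul_le_mul_of_nonneg_left hmgf (exp_pos _).le
    _ = exp (-(ε ^ 2 / 16 * m ^ 2)) := by
        rw [← exp_add, ht_def]
        ring_nf

lemma exists_good_colouring (hx : IsWeighting P x) {ε : ℝ} (hε₀ : 0 ≤ ε) (hε₄ : ε ≤ 4)
    (hm : m * 2 ^ m * 2 ^ m * exp (-(ε ^ 2 / 16 * m ^ 2)) < 1) :
    ∃ g ∈ Fintype.piFinset (fun _ : RangePair m => palColours P), 0 < piWeight x g ∧
      ∀ v < m, ∀ S ⊆ range m, ∀ T ⊆ range m, -(ε * m ^ 2) ≤ devSum P x g v S T := by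
  classical
  obtain ⟨g, hg, hpos, hgood⟩ := exists_piWeight_pos_forall_not hx.1 hx.2
    (range m ×ˢ (range m).powerset ×ˢ (range m).powerset)
    (fun j g => ε * m ^ 2 ≤ -devSum P x g j.1 j.2.1 j.2.2)
    (fun j hj => by
      simp only [mem_product, mem_powerset] at hj
      exact sum_piWeight_devSum_le hx hj.2.1 hj.2.2 hε₀ hε₄)
    (by simpa [card_product, card_powerset, mul_assoc] using hm)
  refine ⟨g, hg, hpos, fun v hv S hS T hT => ?_⟩
  have := hgood (v, S, T) (by simp [hv, hS, hT])
  linarith [not_le.mp this]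

end RandomColouring

section Density

lemma card_filter_KEE_diag_le (H : ThreeGraph) (P' Q' : Finset (Finset ℕ)) :
    #{p ∈ KEE H P' Q' | p.1 = p.2.2} ≤ #H.verts ^ 2 := by
  rw [sq, ← card_product]
  refine card_le_card_of_injOn (fun p => (p.1, p.2.1)) (fun p hp => ?_) fun p hp q hq h => ?_
  · simp only [KEE, coe_filter, Set.mem_ofPred_eq, mem_filter, mem_product] at hp
    simp [hp.1.1.1, hp.1.1.2.1]
  · simp only [coe_filter, Set.mem_ofPred_eq, Prod.mk.injEq] at hp hq h
    exact Prod.ext h.1 (Prod.ext h.2 (by rw [← hp.2, ← hq.2, h.1]))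

lemma sum_KEE_eq_sum_cherries (H : ThreeGraph) {P' Q' : Finset (Finset ℕ)}
    (hP' : ∀ p ∈ P', p.card = 2) (hQ' : ∀ q ∈ Q', q.card = 2) (f : ℕ → ℕ → ℕ → ℝ) :
    ∑ p ∈ KEE H P' Q' with p.1 ≠ p.2.2, f p.1 p.2.1 p.2.2 =
      ∑ v ∈ H.verts, ∑ q ∈ cherries v {u ∈ H.verts | {u, v} ∈ P'} {w ∈ H.verts | {v, w} ∈ Q'},
        f q.1 v q.2 := by
  rw [sum_sigma']
  refine sum_nbij' (fun p => ⟨p.2.1, (p.1, p.2.2)⟩) (fun s => (s.2.1, s.1, s.2.2)) ?_ ?_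
    (fun _ _ => rfl) (fun _ _ => rfl) (fun _ _ => rfl)
  · rintro ⟨u, v, w⟩ hp
    simp only [KEE, cherries, mem_filter, mem_product, mem_sigma] at hp ⊢
    have huv := card_pair_eq_two_iff.mp (hP' _ hp.1.2.1)
    have hvw := card_pair_eq_two_iff.mp (hQ' _ hp.1.2.2)
    exact ⟨hp.1.1.2.1, ⟨⟨hp.1.1.1, hp.1.2.1⟩, hp.1.1.2.2, hp.1.2.2⟩, hp.2, huv, hvw.symm⟩
  · rintro ⟨v, u, w⟩ hs
    simp only [KEE, cherries, mem_filter, mem_product, mem_sigma] at hs ⊢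
    exact ⟨⟨⟨hs.2.1.1.1, hs.1, hs.2.1.2.1⟩, hs.2.1.1.2, hs.2.1.2.2⟩, hs.2.2.1⟩

variable {P : Palette} {x : ℕ → ℝ} {m : ℕ} {g : RangePair m → ℕ}

lemma pairColouring_mem_palColours (hg : g ∈ Fintype.piFinset fun _ => palColours P) {u v : ℕ}
    (hu : u < m) (hv : v < m) (huv : u ≠ v) : pairColouring g {u, v} ∈ palColours P := by
  rw [pairColouring_of_mem g (pair_mem_powersetCard hu hv huv)]
  exact Fintype.mem_piFinset.mp hg _

lemma lamEE_le_closeProb (hx : IsWeighting P x) (hg : g ∈ Fintype.piFinset fun _ => palColours P)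
    (hpos : 0 < piWeight x g) {u v w : ℕ} (hu : u < m) (hv : v < m) (hw : w < m) (huv : u ≠ v)
    (hvw : v ≠ w) (huw : u ≠ w) :
    lamEE P x ≤ closeProb P x u v w (pairColouring g {u, v}) (pairColouring g {v, w}) := by
  have hpos' : ∀ {a b : ℕ}, a < m → b < m → a ≠ b → 0 < x (pairColouring g {a, b}) :=
    fun ha hb hab => by
      rw [pairColouring_of_mem g (pair_mem_powersetCard ha hb hab)]
      exact pos_of_piWeight_pos hx.1 hg hpos _
  exact (lamEE_le_lamCodeg hx (pairColouring_mem_palColours hg hu hv huv)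
    (pairColouring_mem_palColours hg hv hw hvw) (mul_pos (hpos' hu hv huv) (hpos' hv hw hvw))).trans
    (lamCodeg_le_closeProb huv hvw huw _ _)

lemma cherryDev_add_lamEE_le (hx : IsWeighting P x)
    (hg : g ∈ Fintype.piFinset fun _ => palColours P) (hpos : 0 < piWeight x g) {u v w : ℕ}
    (hu : u < m) (hv : v < m) (hw : w < m) (huv : u ≠ v) (hvw : v ≠ w) (huw : u ≠ w) :
    cherryDev P x (pairColouring g) u v w + lamEE P x ≤
      if {u, v, w} ∈ (paletteGraph P m (pairColouring g)).edges then 1 else 0 := by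
  have hlam := lamEE_le_closeProb hx hg hpos hu hv hw huv hvw huw
  simp only [mem_paletteGraph_edges_iff huv hvw huw hu hv hw, cherryDev]
  split_ifs <;> linarith

lemma isDenseEE_paletteGraph (hx : IsWeighting P x)
    (hg : g ∈ Fintype.piFinset fun _ => palColours P) (hpos : 0 < piWeight x g) {ε η : ℝ}
    (hgood : ∀ v < m, ∀ S ⊆ range m, ∀ T ⊆ range m, -(ε * m ^ 2) ≤ devSum P x g v S T)
    (hm : m ^ 2 + ε * m ^ 3 ≤ η * m ^ 3) :
    IsDenseEE (paletteGraph P m (pairColouring g)) (lamEE P x) η := by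
  intro P' Q' hP' hQ'
  set H := paletteGraph P m (pairColouring g)
  set K := KEE H P' Q'
  set Kd := K.filter fun p => p.1 ≠ p.2.2
  have hcard : (#K : ℝ) ≤ #Kd + m ^ 2 := by
    have hdiag : #{p ∈ K | p.1 = p.2.2} ≤ m ^ 2 := by
      simpa [H] using card_filter_KEE_diag_le H P' Q'
    have hsplit : #{p ∈ K | p.1 = p.2.2} + #Kd = #K :=
      card_filter_add_card_filter_not (s := K) fun p => p.1 = p.2.2
    exact_mod_cast (by omega : #K ≤ #Kd + m ^ 2)
  have hdev : -(ε * m ^ 3) ≤ ∑ p ∈ Kd, cherryDev P x (pairColouring g) p.1 p.2.1 p.2.2 := by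
    rw [sum_KEE_eq_sum_cherries H (fun p hp => (hP' p hp).2) (fun q hq => (hQ' q hq).2)]
    calc -(ε * m ^ 3) = ∑ v ∈ range m, -(ε * m ^ 2) := by simp; ring
      _ ≤ _ := sum_le_sum fun v hv => hgood v (mem_range.mp hv) _ (filter_subset _ _) _
        (filter_subset _ _)
  have hedge : ∀ p ∈ Kd, cherryDev P x (pairColouring g) p.1 p.2.1 p.2.2 + lamEE P x ≤
      if {p.1, p.2.1, p.2.2} ∈ H.edges then 1 else 0 := by
    intro p hp
    simp only [Kd, K, KEE, mem_filter, mem_product, H, paletteGraph_verts, mem_range] at hp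
    obtain ⟨⟨⟨hu, hv, hw⟩, huv, hvw⟩, huw⟩ := hp
    exact cherryDev_add_lamEE_le hx hg hpos hu hv hw (card_pair_eq_two_iff.mp (hP' _ huv).2)
      (card_pair_eq_two_iff.mp (hQ' _ hvw).2) huw
  have hedges : ∑ p ∈ Kd, (if {p.1, p.2.1, p.2.2} ∈ H.edges then 1 else 0 : ℝ) ≤ eEE H P' Q' := by
    rw [sum_boole, eEE]
    exact_mod_cast card_le_card (filter_subset_filter _ (filter_subset _ _))
  have hlam := lamEE_le_one hx
  have hlam₀ := lamEE_nonneg hx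
  simp only [H, paletteGraph_verts, card_range] at hedges ⊢
  calc lamEE P x * #K - η * m ^ 3 ≤ ∑ p ∈ Kd, cherryDev P x (pairColouring g) p.1 p.2.1 p.2.2
        + #Kd * lamEE P x := by nlinarith
    _ ≤ _ := by
        rw [← nsmul_eq_mul, ← sum_const, ← sum_add_distrib]
        exact (sum_le_sum hedge).trans hedges

end Density

open Filter in
lemma eventually_mul_two_pow_mul_two_pow_mul_exp_lt_one {c : ℝ} (hc : 0 < c) :
    ∀ᶠ m : ℕ in atTop, m * 2 ^ m * 2 ^ m * exp (-(c * m ^ 2)) < 1 := by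
  filter_upwards [tendsto_natCast_atTop_atTop.eventually_gt_atTop (3 / c)] with m hm
  have hm₀ : (0 : ℝ) < m := lt_trans (by positivity) hm
  have hexp3 : (8 : ℝ) ≤ exp 3 := by
    calc (8 : ℝ) = 2 ^ 3 := by norm_num
      _ ≤ exp 1 ^ 3 := pow_le_pow_left₀ (by norm_num) (by linarith [add_one_le_exp (1 : ℝ)]) 3
      _ = exp 3 := by rw [← exp_nat_mul]; norm_num
  have hcm : 3 < c * m := by rwa [div_lt_iff₀ hc, mul_comm] at hm
  calc (m : ℝ) * 2 ^ m * 2 ^ m * exp (-(c * m ^ 2))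
      < 2 ^ m * 2 ^ m * 2 ^ m * exp (-(c * m ^ 2)) := by
        gcongr
        exact_mod_cast Nat.lt_two_pow_self
    _ = 8 ^ m * exp (-(c * m ^ 2)) := by rw [← mul_pow, ← mul_pow]; norm_num
    _ ≤ exp 3 ^ m * exp (-(c * m ^ 2)) := by gcongr
    _ = exp (-(m * (c * m - 3))) := by rw [← exp_nat_mul, ← exp_add]; ring_nf
    _ ≤ 1 := exp_le_one_iff.mpr (by nlinarith)

open Filter in
lemma exists_large_free_isDenseEE {P : Palette} {x : ℕ → ℝ} {𝓕 : Set ThreeGraph}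
    (hx : IsWeighting P x) (h𝓕 : ∀ F ∈ 𝓕, ¬ Satisfies F P) {η : ℝ} (hη : 0 < η) (n : ℕ) :
    ∃ H : ThreeGraph, n ≤ H.verts.card ∧ (∀ F ∈ 𝓕, ¬ IsSubhypergraph F H) ∧
      IsDenseEE H (lamEE P x) η := by
  set ε := min (η / 2) 1
  have hε₀ : 0 < ε := lt_min (half_pos hη) one_pos
  obtain ⟨m, hmn, hmη, hsmall⟩ := ((eventually_ge_atTop n).and
    ((tendsto_natCast_atTop_atTop.eventually_ge_atTop (2 / η)).and
      (eventually_mul_two_pow_mul_two_pow_mul_exp_lt_one (c := ε ^ 2 / 16) (by positivity)))).exists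
  obtain ⟨g, hg, hpos, hgood⟩ :=
    exists_good_colouring hx hε₀.le ((min_le_right _ _).trans (by norm_num)) hsmall
  refine ⟨paletteGraph P m (pairColouring g), by simpa using hmn, fun F hF hFH => h𝓕 F hF
    (.of_isSubhypergraph hFH (satisfies_paletteGraph fun u hu v hv huv =>
      pairColouring_mem_palColours hg hu hv huv)), isDenseEE_paletteGraph hx hg hpos hgood ?_⟩
  have hεη : ε ≤ η / 2 := min_le_left _ _
  have hm₀ : (0 : ℝ) ≤ m := m.cast_nonneg
  have hm1 : 1 ≤ η / 2 * m := by
    rw [div_le_iff₀ hη] at hmη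
    linarith
  nlinarith [mul_le_mul_of_nonneg_right hεη (pow_nonneg hm₀ 3),
    mul_le_mul_of_nonneg_right hm1 (sq_nonneg (m : ℝ))]

/-- If no member of a family 𝓕 satisfies the palette 𝒫, then
π_{ee}(𝓕) ≥ Λ^{ee}_𝒫. -/
theorem palette_lower_bound_EE (P : Palette) (𝓕 : Set ThreeGraph)
    (h : ∀ F ∈ 𝓕, ¬ Satisfies F P) :
    LambdaEE P ≤ piEE 𝓕 := by
  refine Real.sSup_le ?_ (Real.sSup_nonneg fun d hd => hd.1)
  rintro _ ⟨x, hx, rfl⟩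
  exact le_csSup ⟨1, fun d hd => hd.2.1⟩
    ⟨lamEE_nonneg hx, lamEE_le_one hx, fun η hη n => exists_large_free_isDenseEE hx h hη n⟩
end

section
/- For every palette 𝒫 and every ν>0 there exists β∈(0,1] such that for every weighting x of 𝒫 there exists a colour a∈Φ(𝒫) with x_a ≥ β and λ^a_𝒫(x) ≤ Λ^{e↦v}_𝒫 + ν. -/
open Finset

noncomputable section

private lemma pal_mem_colours {P : Palette} {p : ℕ × ℕ × ℕ} (hp : p ∈ P) :
    p.1 ∈ palColours P ∧ p.2.1 ∈ palColours P ∧ p.2.2 ∈ palColours P := by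
  refine ⟨?_, ?_, ?_⟩ <;>
    simp only [palColours, Finset.mem_union, Finset.mem_image]
  · exact Or.inl (Or.inl ⟨p, hp, rfl⟩)
  · exact Or.inl (Or.inr ⟨p, hp, rfl⟩)
  · exact Or.inr ⟨p, hp, rfl⟩

private lemma weight_le_one {P : Palette} {z : ℕ → ℝ} (hz : IsWeighting P z) {c : ℕ}
    (hc : c ∈ palColours P) : z c ≤ 1 :=
  hz.2 ▸ Finset.single_le_sum (fun i hi => hz.1 i hi) hc

private lemma lamDeg_nonneg {P : Palette} {z : ℕ → ℝ} (hz : IsWeighting P z) (a : ℕ) :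
    0 ≤ lamDeg P a z := by
  have h1 : 0 ≤ ∑ p ∈ P.filter (fun p => p.1 = a), z p.2.1 * z p.2.2 :=
    Finset.sum_nonneg fun p hp => mul_nonneg
      (hz.1 _ (pal_mem_colours (Finset.mem_filter.mp hp).1).2.1)
      (hz.1 _ (pal_mem_colours (Finset.mem_filter.mp hp).1).2.2)
  have h2 : 0 ≤ ∑ p ∈ P.filter (fun p => p.2.1 = a), z p.1 * z p.2.2 :=
    Finset.sum_nonneg fun p hp => mul_nonneg
      (hz.1 _ (pal_mem_colours (Finset.mem_filter.mp hp).1).1)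
      (hz.1 _ (pal_mem_colours (Finset.mem_filter.mp hp).1).2.2)
  have h3 : 0 ≤ ∑ p ∈ P.filter (fun p => p.2.2 = a), z p.1 * z p.2.1 :=
    Finset.sum_nonneg fun p hp => mul_nonneg
      (hz.1 _ (pal_mem_colours (Finset.mem_filter.mp hp).1).1)
      (hz.1 _ (pal_mem_colours (Finset.mem_filter.mp hp).1).2.1)
  exact le_min (le_min h1 h2) h3

private lemma lamDeg_le_card {P : Palette} {z : ℕ → ℝ} (hz : IsWeighting P z) (a : ℕ) :
    lamDeg P a z ≤ P.card := by
  have : lamDeg P a z ≤ ∑ p ∈ P.filter (fun p => p.1 = a), z p.2.1 * z p.2.2 :=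
    le_trans (min_le_left _ _) (min_le_left _ _)
  refine this.trans ?_
  calc ∑ p ∈ P.filter (fun p => p.1 = a), z p.2.1 * z p.2.2
      ≤ ∑ p ∈ P.filter (fun p => p.1 = a), 1 := by
        refine Finset.sum_le_sum fun p hp => ?_
        have h := pal_mem_colours (Finset.mem_filter.mp hp).1
        have := hz.1 _ h.2.1
        have := hz.1 _ h.2.2
        have := weight_le_one hz h.2.1
        have := weight_le_one hz h.2.2
        nlinarith
    _ = ((P.filter (fun p => p.1 = a)).card : ℝ) := by simp
    _ ≤ (P.card : ℝ) := by exact_mod_cast Finset.card_filter_le _ _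

private lemma exists_pos_weight {P : Palette} {z : ℕ → ℝ} (hz : IsWeighting P z) :
    ∃ a ∈ palColours P, 0 < z a := by
  by_contra h
  push_neg at h
  have : ∑ a ∈ palColours P, z a ≤ 0 := Finset.sum_nonpos h
  linarith [hz.2]

private lemma lamEV_le_card {P : Palette} {z : ℕ → ℝ} (hz : IsWeighting P z) :
    lamEV P z ≤ P.card := by
  obtain ⟨a, ha, hpos⟩ := exists_pos_weight hz
  have hbdd : BddBelow {l : ℝ | ∃ a ∈ palColours P, 0 < z a ∧ l = lamDeg P a z} := by
    refine ⟨0, ?_⟩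
    rintro l ⟨b, hb, _, rfl⟩
    exact lamDeg_nonneg hz b
  exact le_trans (csInf_le hbdd ⟨a, ha, hpos, rfl⟩) (lamDeg_le_card hz a)

private lemma lamEV_le_LambdaEV {P : Palette} {z : ℕ → ℝ} (hz : IsWeighting P z) :
    lamEV P z ≤ LambdaEV P := by
  refine le_csSup ⟨(P.card : ℝ), ?_⟩ ⟨z, hz, rfl⟩
  rintro l ⟨w, hw, rfl⟩
  exact lamEV_le_card hw

private lemma lamEV_attained {P : Palette} {z : ℕ → ℝ} (hz : IsWeighting P z) :
    ∃ a ∈ palColours P, 0 < z a ∧ lamDeg P a z = lamEV P z := by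
  set S := {l : ℝ | ∃ a ∈ palColours P, 0 < z a ∧ l = lamDeg P a z} with hS
  have hfin : S.Finite := by
    refine Set.Finite.subset (Finset.finite_toSet ((palColours P).image (fun a => lamDeg P a z))) ?_
    rintro l ⟨a, ha, _, rfl⟩
    simp only [Finset.coe_image, Set.mem_image, Finset.mem_coe]
    exact ⟨a, ha, rfl⟩
  obtain ⟨a, ha, hpos⟩ := exists_pos_weight hz
  have hne : S.Nonempty := ⟨lamDeg P a z, a, ha, hpos, rfl⟩
  obtain ⟨b, hb, hbpos, hbeq⟩ := hne.csInf_mem hfin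
  exact ⟨b, hb, hbpos, by rw [lamEV, ← hS]; exact hbeq.symm⟩

set_option maxHeartbeats 1000000 in
/-- For every palette 𝒫 and ν > 0 there is β ∈ (0,1] so that every
weighting x admits a colour a with x_a ≥ β and λ^a_𝒫(x) ≤ Λ^{e↦v}_𝒫 + ν. -/
theorem popular_colour_EV (P : Palette) (ν : ℝ) (hν : 0 < ν) :
    ∃ β : ℝ, 0 < β ∧ β ≤ 1 ∧ ∀ x : ℕ → ℝ, IsWeighting P x →
      ∃ a ∈ palColours P, β ≤ x a ∧ lamDeg P a x ≤ LambdaEV P + ν := by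
  classical
  set β : ℝ := min (ν / (P.card + 1)) (1 / (2 * ((palColours P).card + 1))) with hβdef
  have hPc : (0:ℝ) ≤ (P.card : ℝ) := Nat.cast_nonneg _
  have hΦc : (0:ℝ) ≤ ((palColours P).card : ℝ) := Nat.cast_nonneg _
  have hβpos : 0 < β := lt_min (by positivity) (by positivity)
  have hβ1 : β ≤ ν / (P.card + 1) := min_le_left _ _
  have hβ2 : β ≤ 1 / (2 * ((palColours P).card + 1)) := min_le_right _ _
  clear_value β
  refine ⟨β, hβpos, ?_, ?_⟩
  · refine hβ2.trans ?_
    rw [div_le_one (by positivity)]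
    linarith
  intro x hx
  obtain ⟨hx0, hx1⟩ := hx
  have hxle : ∀ c ∈ palColours P, x c ≤ 1 := fun c hc => weight_le_one ⟨hx0, hx1⟩ hc
  set s := ∑ a ∈ (palColours P).filter (fun a => x a < β), x a with hs
  have hsle : s ≤ 1/2 := by
    have h1 : s ≤ ∑ a ∈ (palColours P).filter (fun a => x a < β), β :=
      Finset.sum_le_sum fun a ha => le_of_lt (Finset.mem_filter.mp ha).2
    have h2 : ∑ a ∈ (palColours P).filter (fun a => x a < β), β
        = ((palColours P).filter (fun a => x a < β)).card * β := by
      rw [Finset.sum_const, nsmul_eq_mul]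
    have h3 : (((palColours P).filter (fun a => x a < β)).card : ℝ)
        ≤ ((palColours P).card : ℝ) := by
      exact_mod_cast Finset.card_filter_le _ _
    have h4 : ((palColours P).card : ℝ) * β
        ≤ ((palColours P).card : ℝ) * (1 / (2 * ((palColours P).card + 1))) := by
      apply mul_le_mul_of_nonneg_left hβ2 hΦc
    have h5 : ((palColours P).card : ℝ) * (1 / (2 * ((palColours P).card + 1))) ≤ 1/2 := by
      rw [mul_one_div, div_le_div_iff₀ (by positivity) (by norm_num)]
      nlinarith
    nlinarith [mul_le_mul_of_nonneg_right h3 hβpos.le]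
  have hs0 : (0:ℝ) ≤ s := Finset.sum_nonneg fun a ha =>
    hx0 a (Finset.mem_filter.mp ha).1
  have h1s : (0:ℝ) < 1 - s := by linarith
  clear_value s
  set y : ℕ → ℝ := fun a => if β ≤ x a then x a / (1 - s) else 0 with hy
  have hy0 : ∀ a, 0 ≤ y a := by
    intro a
    by_cases h : β ≤ x a <;> simp only [hy, h, if_true, if_false]
    · exact div_nonneg (le_trans hβpos.le h) h1s.le
    · exact le_refl 0
  have hLsum : ∑ a ∈ (palColours P).filter (fun a => β ≤ x a), x a = 1 - s := by
    have h := Finset.sum_filter_add_sum_filter_not (palColours P) (fun a => β ≤ x a) x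
    have he : (palColours P).filter (fun a => ¬ β ≤ x a)
        = (palColours P).filter (fun a => x a < β) := by
      apply Finset.filter_congr; intro a _; simp [not_le]
    rw [he, hx1] at h
    linarith
  have hysum : ∑ a ∈ palColours P, y a = 1 := by
    have : ∑ a ∈ palColours P, y a
        = ∑ a ∈ (palColours P).filter (fun a => β ≤ x a), x a / (1 - s) := by
      rw [Finset.sum_filter]
    rw [this, ← Finset.sum_div, hLsum, div_self h1s.ne']
  have hyw : IsWeighting P y := ⟨fun a _ => hy0 a, hysum⟩
  obtain ⟨a, haΦ, hay, haeq⟩ := lamEV_attained hyw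
  have hax : β ≤ x a := by
    by_contra h
    simp only [hy, h, if_false] at hay
    exact lt_irrefl 0 hay
  refine ⟨a, haΦ, hax, ?_⟩
  have hkey : ∀ c ∈ palColours P, ∀ d ∈ palColours P, x c * x d ≤ y c * y d + β := by
    intro c hc d hd
    have hc0 := hx0 c hc
    have hd0 := hx0 d hd
    have hc1 := hxle c hc
    have hd1 := hxle d hd
    by_cases h1 : β ≤ x c
    · by_cases h2 : β ≤ x d
      · have hyy : y c * y d = (x c * x d) / ((1-s)*(1-s)) := by
          simp only [hy, h1, h2, if_true]
          rw [div_mul_div_comm]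
        have hle : x c * x d ≤ y c * y d := by
          rw [hyy, le_div_iff₀ (by positivity)]
          nlinarith [mul_nonneg hc0 hd0, hs0, h1s, mul_nonneg hs0 (mul_nonneg hc0 hd0)]
        linarith
      · push_neg at h2
        have : x c * x d ≤ β := by nlinarith
        have := mul_nonneg (hy0 c) (hy0 d)
        linarith
    · push_neg at h1
      have : x c * x d ≤ β := by nlinarith
      have := mul_nonneg (hy0 c) (hy0 d)
      linarith
  have hb1 : ∑ p ∈ P.filter (fun p => p.1 = a), x p.2.1 * x p.2.2
      ≤ (∑ p ∈ P.filter (fun p => p.1 = a), y p.2.1 * y p.2.2) + P.card * β := by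
    calc ∑ p ∈ P.filter (fun p => p.1 = a), x p.2.1 * x p.2.2
        ≤ ∑ p ∈ P.filter (fun p => p.1 = a), (y p.2.1 * y p.2.2 + β) := by
          refine Finset.sum_le_sum fun p hp => ?_
          have h := pal_mem_colours (Finset.mem_filter.mp hp).1
          exact hkey _ h.2.1 _ h.2.2
      _ = (∑ p ∈ P.filter (fun p => p.1 = a), y p.2.1 * y p.2.2)
            + ((P.filter (fun p => p.1 = a)).card : ℝ) * β := by
          rw [Finset.sum_add_distrib, Finset.sum_const, nsmul_eq_mul]
      _ ≤ _ := by
          have h3 : (((P.filter (fun p => p.1 = a))).card : ℝ) ≤ (P.card : ℝ) := by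
            exact_mod_cast Finset.card_filter_le _ _
          have := mul_le_mul_of_nonneg_right h3 hβpos.le
          linarith
  have hb2 : ∑ p ∈ P.filter (fun p => p.2.1 = a), x p.1 * x p.2.2
      ≤ (∑ p ∈ P.filter (fun p => p.2.1 = a), y p.1 * y p.2.2) + P.card * β := by
    calc ∑ p ∈ P.filter (fun p => p.2.1 = a), x p.1 * x p.2.2
        ≤ ∑ p ∈ P.filter (fun p => p.2.1 = a), (y p.1 * y p.2.2 + β) := by
          refine Finset.sum_le_sum fun p hp => ?_
          have h := pal_mem_colours (Finset.mem_filter.mp hp).1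
          exact hkey _ h.1 _ h.2.2
      _ = (∑ p ∈ P.filter (fun p => p.2.1 = a), y p.1 * y p.2.2)
            + ((P.filter (fun p => p.2.1 = a)).card : ℝ) * β := by
          rw [Finset.sum_add_distrib, Finset.sum_const, nsmul_eq_mul]
      _ ≤ _ := by
          have h3 : (((P.filter (fun p => p.2.1 = a))).card : ℝ) ≤ (P.card : ℝ) := by
            exact_mod_cast Finset.card_filter_le _ _
          have := mul_le_mul_of_nonneg_right h3 hβpos.le
          linarith
  have hb3 : ∑ p ∈ P.filter (fun p => p.2.2 = a), x p.1 * x p.2.1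
      ≤ (∑ p ∈ P.filter (fun p => p.2.2 = a), y p.1 * y p.2.1) + P.card * β := by
    calc ∑ p ∈ P.filter (fun p => p.2.2 = a), x p.1 * x p.2.1
        ≤ ∑ p ∈ P.filter (fun p => p.2.2 = a), (y p.1 * y p.2.1 + β) := by
          refine Finset.sum_le_sum fun p hp => ?_
          have h := pal_mem_colours (Finset.mem_filter.mp hp).1
          exact hkey _ h.1 _ h.2.1
      _ = (∑ p ∈ P.filter (fun p => p.2.2 = a), y p.1 * y p.2.1)
            + ((P.filter (fun p => p.2.2 = a)).card : ℝ) * β := by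
          rw [Finset.sum_add_distrib, Finset.sum_const, nsmul_eq_mul]
      _ ≤ _ := by
          have h3 : (((P.filter (fun p => p.2.2 = a))).card : ℝ) ≤ (P.card : ℝ) := by
            exact_mod_cast Finset.card_filter_le _ _
          have := mul_le_mul_of_nonneg_right h3 hβpos.le
          linarith
  have hmain : lamDeg P a x ≤ lamDeg P a y + P.card * β := by
    unfold lamDeg
    have := min_le_min (min_le_min hb1 hb2) hb3
    refine this.trans (le_of_eq ?_)
    rw [← min_add_add_right, ← min_add_add_right]
  have hcb : (P.card : ℝ) * β ≤ ν := by
    have h1 : (P.card : ℝ) * β ≤ (P.card : ℝ) * (ν / (P.card + 1)) :=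
      mul_le_mul_of_nonneg_left hβ1 hPc
    have h2 : (P.card : ℝ) * (ν / (P.card + 1)) ≤ ν := by
      rw [mul_div_assoc', div_le_iff₀ (by positivity)]
      nlinarith
    linarith
  have hfin := lamEV_le_LambdaEV hyw
  calc lamDeg P a x ≤ lamDeg P a y + P.card * β := hmain
    _ = lamEV P y + P.card * β := by rw [haeq]
    _ ≤ LambdaEV P + ν := by linarith
end
end

section
/- The Lagrangian of the 3-uniform tight cycle of length 5 satisfies (1/6)·Λ_{C₅^{(3)}} = 1/25, i.e., Λ_{C₅^{(3)}} = 6/25. -/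
open Finset

lemma amgm3 (x y z : ℝ) (hx : 0 ≤ x) (hy : 0 ≤ y) (hz : 0 ≤ z) :
    x*y*z ≤ (x+y+z)^3/27 := by
  nlinarith [sq_nonneg (x-y), sq_nonneg (y-z), sq_nonneg (x-z), mul_nonneg hx hy, mul_nonneg hy hz, mul_nonneg hx hz, sq_nonneg (x+y+z)]

lemma qf4 (u1 u2 u3 u4 : ℝ) :
    2*(u1*u2+u2*u3+u3*u4) + u1*u3+u2*u4+u1*u4 ≤ 7/12*(u1+u2+u3+u4)^2 := by
  nlinarith [sq_nonneg (u1 - 5/7*u2 + 1/7*u3 + 1/7*u4), sq_nonneg (u2 - 5/4*u3 + 1/2*u4), sq_nonneg (u3 - 2*u4)]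

lemma cubic1 (a t : ℝ) (ha : 0 ≤ a) (ht : 0 ≤ t) (hs : 5*a + t = 1) :
    5*a^3 + 3*a^2*t + 7/12*a*t^2 + t^3/27 ≤ 1/25 := by
  have ha5 : a = (1-t)/5 := by linarith
  subst ha5
  have ht1 : t ≤ 1 := by linarith
  have key : (1:ℝ)/25 - (5*((1-t)/5)^3 + 3*((1-t)/5)^2*t + 7/12*((1-t)/5)*t^2 + t^3/27)
      = t^2*(9 - t)/2700 := by ring
  nlinarith [mul_nonneg (sq_nonneg t) (by linarith : (0:ℝ) ≤ 9 - t)]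

lemma base5 (a b c d e : ℝ) (ha : 0 ≤ a) (h1 : a ≤ b) (h2 : a ≤ c) (h3 : a ≤ d)
    (h4 : a ≤ e) (hs : a+b+c+d+e = 1) :
    a*b*c + b*c*d + c*d*e + d*e*a + e*a*b ≤ 1/25 := by
  have hid : a*b*c + b*c*d + c*d*e + d*e*a + e*a*b
      = 5*a^3 + 3*a^2*((b-a)+(c-a)+(d-a)+(e-a))
        + a*(2*((b-a)*(c-a)+(c-a)*(d-a)+(d-a)*(e-a)) + (b-a)*(d-a)+(c-a)*(e-a)+(b-a)*(e-a))
        + (c-a)*(d-a)*((b-a)+(e-a)) := by ring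
  have hqf := qf4 (b-a) (c-a) (d-a) (e-a)
  have hq := mul_le_mul_of_nonneg_left hqf ha
  have hc : (c-a)*(d-a)*((b-a)+(e-a)) ≤ ((c-a)+(d-a)+((b-a)+(e-a)))^3/27 :=
    amgm3 (c-a) (d-a) ((b-a)+(e-a)) (by linarith) (by linarith) (by linarith)
  have hcube := cubic1 a ((b-a)+(c-a)+(d-a)+(e-a)) ha (by linarith) (by linarith)
  have hpow : ((c-a)+(d-a)+((b-a)+(e-a)))^3 = ((b-a)+(c-a)+(d-a)+(e-a))^3 := by ring
  rw [hpow] at hc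
  linarith

lemma key5 (a b c d e : ℝ) (ha : 0 ≤ a) (hb : 0 ≤ b) (hc : 0 ≤ c) (hd : 0 ≤ d)
    (he : 0 ≤ e) (hs : a+b+c+d+e = 1) :
    a*b*c + b*c*d + c*d*e + d*e*a + e*a*b ≤ 1/25 := by
  rcases le_total a b with h1|h1
  · rcases le_total a c with h2|h2
    · rcases le_total a d with h3|h3
      · rcases le_total a e with h4|h4
        · exact base5 a b c d e ha h1 h2 h3 h4 hs
        · have := base5 e a b c d he (by linarith) (by linarith) (by linarith) (by linarith) (by linarith)
          linarith
      · rcases le_total d e with h4|h4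
        · have := base5 d e a b c hd (by linarith) (by linarith) (by linarith) (by linarith) (by linarith)
          linarith
        · have := base5 e a b c d he (by linarith) (by linarith) (by linarith) (by linarith) (by linarith)
          linarith
    · rcases le_total c d with h3|h3
      · rcases le_total c e with h4|h4
        · have := base5 c d e a b hc (by linarith) (by linarith) (by linarith) (by linarith) (by linarith)
          linarith
        · have := base5 e a b c d he (by linarith) (by linarith) (by linarith) (by linarith) (by linarith)
          linarith
      · rcases le_total d e with h4|h4
        · have := base5 d e a b c hd (by linarith) (by linarith) (by linarith) (by linarith) (by linarith)
          linarith
        · have := base5 e a b c d he (by linarith) (by linarith) (by linarith) (by linarith) (by linarith)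
          linarith
  · rcases le_total b c with h2|h2
    · rcases le_total b d with h3|h3
      · rcases le_total b e with h4|h4
        · have := base5 b c d e a hb (by linarith) (by linarith) (by linarith) (by linarith) (by linarith)
          linarith
        · have := base5 e a b c d he (by linarith) (by linarith) (by linarith) (by linarith) (by linarith)
          linarith
      · rcases le_total d e with h4|h4
        · have := base5 d e a b c hd (by linarith) (by linarith) (by linarith) (by linarith) (by linarith)
          linarith
        · have := base5 e a b c d he (by linarith) (by linarith) (by linarith) (by linarith) (by linarith)
          linarith
    · rcases le_total c d with h3|h3
      · rcases le_total c e with h4|h4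
        · have := base5 c d e a b hc (by linarith) (by linarith) (by linarith) (by linarith) (by linarith)
          linarith
        · have := base5 e a b c d he (by linarith) (by linarith) (by linarith) (by linarith) (by linarith)
          linarith
      · rcases le_total d e with h4|h4
        · have := base5 d e a b c hd (by linarith) (by linarith) (by linarith) (by linarith) (by linarith)
          linarith
        · have := base5 e a b c d he (by linarith) (by linarith) (by linarith) (by linarith) (by linarith)
          linarith


/-- The 3-uniform tight cycle of length 5 has Lagrangian 6/25, i.e.,
(1/6)·Λ = 1/25. -/
theorem lagrangian_tight_cycle_five (C : ThreeGraph)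
    (hV : C.verts = Finset.range 5)
    (hE : ∀ e : Finset ℕ, e ∈ C.edges ↔
      ∃ i < 5, e = ({i, (i + 1) % 5, (i + 2) % 5} : Finset ℕ)) :
    lagrangian C = 6 / 25 ∧ (1 / 6 : ℝ) * lagrangian C = 1 / 25 := by
  have hEdges : C.edges = ({{0,1,2},{1,2,3},{2,3,4},{0,3,4},{0,1,4}} : Finset (Finset ℕ)) := by
    ext e
    rw [hE]
    constructor
    · rintro ⟨i, hi, rfl⟩
      interval_cases i <;> decide
    · intro h
      fin_cases h
      · exact ⟨0, by norm_num, by decide⟩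
      · exact ⟨1, by norm_num, by decide⟩
      · exact ⟨2, by norm_num, by decide⟩
      · exact ⟨3, by norm_num, by decide⟩
      · exact ⟨4, by norm_num, by decide⟩
  have hsum5 : ∀ x : ℕ → ℝ, lagrangePoly C x
      = 6*(x 0*x 1*x 2 + x 1*x 2*x 3 + x 2*x 3*x 4 + x 3*x 4*x 0 + x 4*x 0*x 1) := by
    intro x
    unfold lagrangePoly
    rw [hEdges]
    rw [Finset.sum_insert (by decide), Finset.sum_insert (by decide),
      Finset.sum_insert (by decide), Finset.sum_insert (by decide), Finset.sum_singleton]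
    rw [show ({0,1,2} : Finset ℕ) = insert 0 (insert 1 {2}) from rfl,
      show ({1,2,3} : Finset ℕ) = insert 1 (insert 2 {3}) from rfl,
      show ({2,3,4} : Finset ℕ) = insert 2 (insert 3 {4}) from rfl,
      show ({0,3,4} : Finset ℕ) = insert 0 (insert 3 {4}) from rfl,
      show ({0,1,4} : Finset ℕ) = insert 0 (insert 1 {4}) from rfl]
    rw [Finset.prod_insert (by decide), Finset.prod_insert (by decide), Finset.prod_singleton,
      Finset.prod_insert (by decide), Finset.prod_insert (by decide), Finset.prod_singleton,
      Finset.prod_insert (by decide), Finset.prod_insert (by decide), Finset.prod_singleton,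
      Finset.prod_insert (by decide), Finset.prod_insert (by decide), Finset.prod_singleton,
      Finset.prod_insert (by decide), Finset.prod_insert (by decide), Finset.prod_singleton]
    ring
  have hub : ∀ l ∈ {l : ℝ | ∃ x : ℕ → ℝ, (∀ v ∈ C.verts, 0 ≤ x v ∧ x v ≤ 1) ∧
      (∑ v ∈ C.verts, x v = 1) ∧ l = lagrangePoly C x}, l ≤ 6/25 := by
    rintro l ⟨x, hx, hx1, rfl⟩
    rw [hV] at hx hx1
    simp only [Finset.sum_range_succ, Finset.sum_range_zero, zero_add] at hx1
    have h0 := hx 0 (by simp)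
    have h1 := hx 1 (by simp)
    have h2 := hx 2 (by simp)
    have h3 := hx 3 (by simp)
    have h4 := hx 4 (by simp)
    have := key5 (x 0) (x 1) (x 2) (x 3) (x 4) h0.1 h1.1 h2.1 h3.1 h4.1 (by linarith)
    rw [hsum5]
    linarith
  have hmem : (6/25 : ℝ) ∈ {l : ℝ | ∃ x : ℕ → ℝ, (∀ v ∈ C.verts, 0 ≤ x v ∧ x v ≤ 1) ∧
      (∑ v ∈ C.verts, x v = 1) ∧ l = lagrangePoly C x} := by
    refine ⟨fun _ => 1/5, fun v _ => ⟨by norm_num, by norm_num⟩, ?_, ?_⟩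
    · rw [hV]
      simp only [Finset.sum_range_succ, Finset.sum_range_zero, zero_add]
      norm_num
    · rw [hsum5]
      norm_num
  have heq : lagrangian C = 6/25 := by
    unfold lagrangian
    exact le_antisymm (csSup_le ⟨6/25, hmem⟩ hub) (le_csSup ⟨6/25, fun l hl => hub l hl⟩ hmem)
  exact ⟨heq, by rw [heq]; norm_num⟩
end

section
/- For every integer ℓ with ℓ = 3 or ℓ ≥ 6, the Lagrangian of the 3-uniform tight cycle of length ℓ satisfies (1/6)·Λ_{C_ℓ^{(3)}} = 1/27, i.e., Λ_{C_ℓ^{(3)}} = 2/9. -/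
open Finset

namespace TC
def W (l k : ℕ) : Finset ℕ := {k, (k + 1) % l, (k + 2) % l}

noncomputable def F (l : ℕ) (x : ℕ → ℝ) : ℝ := ∑ k ∈ range l, ∏ m ∈ W l k, x m

lemma step {l : ℕ} (hl : 6 ≤ l) (x : ℕ → ℝ) (hx : ∀ m ∈ range l, 0 ≤ x m)
    {i j : ℕ} (hi : i ∈ range l) (hj : j ∈ range l) (hxi : x i ≠ 0) (hxj : x j ≠ 0)
    (hpair : ∀ k ∈ range l, ¬(i ∈ W l k ∧ j ∈ W l k))
    (hAB : (∑ k ∈ (range l).filter (fun k => j ∈ W l k), ∏ m ∈ (W l k).erase j, x m) ≤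
           (∑ k ∈ (range l).filter (fun k => i ∈ W l k), ∏ m ∈ (W l k).erase i, x m)) :
    ∃ x' : ℕ → ℝ, (∀ m ∈ range l, 0 ≤ x' m) ∧
      (∑ m ∈ range l, x' m = ∑ m ∈ range l, x m) ∧ F l x ≤ F l x' ∧
      ((range l).filter (fun m => x' m ≠ 0)) ⊆ ((range l).filter (fun m => x m ≠ 0)).erase j := by
  have hij : i ≠ j := by
    intro h
    exact hpair i hi ⟨by rw [W]; exact mem_insert_self _ _, by rw [← h, W]; exact mem_insert_self _ _⟩
  set x' : ℕ → ℝ := Function.update (Function.update x j 0) i (x i + x j) with hx'def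
  have hx'i : x' i = x i + x j := by simp [hx'def]
  have hx'j : x' j = 0 := by simp [hx'def, Function.update_of_ne (Ne.symm hij) , hij]
  have hx'other : ∀ m, m ≠ i → m ≠ j → x' m = x m := by
    intro m hmi hmj
    simp [hx'def, Function.update_of_ne hmi, Function.update_of_ne hmj]
  refine ⟨x', ?_, ?_, ?_, ?_⟩
  · intro m hm
    by_cases h1 : m = i
    · rw [h1, hx'i]; exact add_nonneg (hx i hi) (hx j hj)
    by_cases h2 : m = j
    · rw [h2, hx'j]
    · rw [hx'other m h1 h2]; exact hx m hm
  · have key : ∀ m ∈ range l, x' m = x m + (if m = i then x j else 0) - (if m = j then x j else 0) := by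
      intro m _
      by_cases h1 : m = i
      · subst h1; rw [hx'i]; simp [hij]
      by_cases h2 : m = j
      · subst h2; rw [hx'j]; simp [Ne.symm hij]
      · rw [hx'other m h1 h2]; simp [h1, h2]
    rw [Finset.sum_congr rfl key]
    rw [Finset.sum_sub_distrib, Finset.sum_add_distrib]
    rw [Finset.sum_ite_eq' (range l) i (fun _ => x j), Finset.sum_ite_eq' (range l) j (fun _ => x j)]
    simp [hi, hj]
  · -- F l x ≤ F l x'
    have hprod_i : ∀ k ∈ range l, i ∈ W l k →
        (∏ m ∈ W l k, x' m = (x i + x j) * ∏ m ∈ (W l k).erase i, x m ∧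
         ∏ m ∈ W l k, x m = x i * ∏ m ∈ (W l k).erase i, x m) := by
      intro k hk hik
      have hjk : j ∉ W l k := fun hjW => hpair k hk ⟨hik, hjW⟩
      have herase : ∏ m ∈ (W l k).erase i, x' m = ∏ m ∈ (W l k).erase i, x m := by
        refine Finset.prod_congr rfl fun m hm => ?_
        have hmi : m ≠ i := (Finset.mem_erase.1 hm).1
        have hmj : m ≠ j := fun h => hjk (h ▸ (Finset.mem_erase.1 hm).2)
        exact hx'other m hmi hmj
      constructor
      · rw [← Finset.mul_prod_erase _ _ hik, hx'i, herase]
      · rw [← Finset.mul_prod_erase _ _ hik]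
    have hprod_j : ∀ k ∈ range l, j ∈ W l k →
        (∏ m ∈ W l k, x' m = 0 ∧ ∏ m ∈ W l k, x m = x j * ∏ m ∈ (W l k).erase j, x m) := by
      intro k hk hjk
      constructor
      · exact Finset.prod_eq_zero hjk hx'j
      · rw [← Finset.mul_prod_erase _ _ hjk]
    have hprod_n : ∀ k ∈ range l, i ∉ W l k → j ∉ W l k →
        ∏ m ∈ W l k, x' m = ∏ m ∈ W l k, x m := by
      intro k hk hik hjk
      refine Finset.prod_congr rfl fun m hm => ?_
      exact hx'other m (fun h => hik (h ▸ hm)) (fun h => hjk (h ▸ hm))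
    -- split the sum
    have split : ∀ y : ℕ → ℝ, F l y =
        (∑ k ∈ (range l).filter (fun k => i ∈ W l k), ∏ m ∈ W l k, y m) +
        ((∑ k ∈ ((range l).filter (fun k => ¬ i ∈ W l k)).filter (fun k => j ∈ W l k), ∏ m ∈ W l k, y m) +
         (∑ k ∈ ((range l).filter (fun k => ¬ i ∈ W l k)).filter (fun k => ¬ j ∈ W l k), ∏ m ∈ W l k, y m)) := by
      intro y
      rw [F, ← Finset.sum_filter_add_sum_filter_not (range l) (fun k => i ∈ W l k),
        ← Finset.sum_filter_add_sum_filter_not ((range l).filter (fun k => ¬ i ∈ W l k)) (fun k => j ∈ W l k)]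
    have hKj : ((range l).filter (fun k => ¬ i ∈ W l k)).filter (fun k => j ∈ W l k) =
        (range l).filter (fun k => j ∈ W l k) := by
      rw [Finset.filter_filter]
      refine Finset.filter_congr fun k hk => ?_
      simp only [and_iff_right_iff_imp]
      exact fun hjW hiW => hpair k hk ⟨hiW, hjW⟩
    rw [split x, split x', hKj]
    have e1 : ∑ k ∈ (range l).filter (fun k => i ∈ W l k), ∏ m ∈ W l k, x' m =
        (x i + x j) * ∑ k ∈ (range l).filter (fun k => i ∈ W l k), ∏ m ∈ (W l k).erase i, x m := by
      rw [Finset.mul_sum]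
      refine Finset.sum_congr rfl fun k hk => ?_
      have hk' := Finset.mem_filter.1 hk
      exact (hprod_i k hk'.1 hk'.2).1
    have e2 : ∑ k ∈ (range l).filter (fun k => i ∈ W l k), ∏ m ∈ W l k, x m =
        x i * ∑ k ∈ (range l).filter (fun k => i ∈ W l k), ∏ m ∈ (W l k).erase i, x m := by
      rw [Finset.mul_sum]
      refine Finset.sum_congr rfl fun k hk => ?_
      have hk' := Finset.mem_filter.1 hk
      exact (hprod_i k hk'.1 hk'.2).2
    have e3 : ∑ k ∈ (range l).filter (fun k => j ∈ W l k), ∏ m ∈ W l k, x' m = 0 := by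
      refine Finset.sum_eq_zero fun k hk => ?_
      have hk' := Finset.mem_filter.1 hk
      exact (hprod_j k hk'.1 hk'.2).1
    have e4 : ∑ k ∈ (range l).filter (fun k => j ∈ W l k), ∏ m ∈ W l k, x m =
        x j * ∑ k ∈ (range l).filter (fun k => j ∈ W l k), ∏ m ∈ (W l k).erase j, x m := by
      rw [Finset.mul_sum]
      refine Finset.sum_congr rfl fun k hk => ?_
      have hk' := Finset.mem_filter.1 hk
      exact (hprod_j k hk'.1 hk'.2).2
    have e5 : ∑ k ∈ ((range l).filter (fun k => ¬ i ∈ W l k)).filter (fun k => ¬ j ∈ W l k), ∏ m ∈ W l k, x' m =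
        ∑ k ∈ ((range l).filter (fun k => ¬ i ∈ W l k)).filter (fun k => ¬ j ∈ W l k), ∏ m ∈ W l k, x m := by
      refine Finset.sum_congr rfl fun k hk => ?_
      have hk1 := Finset.mem_filter.1 hk
      have hk2 := Finset.mem_filter.1 hk1.1
      exact hprod_n k hk2.1 hk2.2 hk1.2
    rw [e1, e2, e3, e4, e5]
    have hxj0 : 0 ≤ x j := hx j hj
    nlinarith [mul_le_mul_of_nonneg_left hAB hxj0]
  · intro m hm
    have hm' := Finset.mem_filter.1 hm
    have hmj : m ≠ j := fun h => hm'.2 (h ▸ hx'j)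
    rw [Finset.mem_erase, Finset.mem_filter]
    refine ⟨hmj, hm'.1, ?_⟩
    by_cases h1 : m = i
    · rw [h1]; exact hxi
    · rw [← hx'other m h1 hmj]; exact hm'.2






lemma mod1 {l k : ℕ} (hk : k < l) :
    ((k + 1) % l = k + 1 ∧ k + 1 < l) ∨ ((k + 1) % l = 0 ∧ k + 1 = l) := by
  rcases Nat.lt_or_ge (k + 1) l with h | h
  · exact Or.inl ⟨Nat.mod_eq_of_lt h, h⟩
  · have : k + 1 = l := by omega
    exact Or.inr ⟨by rw [this, Nat.mod_self], this⟩

lemma mod2 {l k : ℕ} (hl : 3 ≤ l) (hk : k < l) :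
    ((k + 2) % l = k + 2 ∧ k + 2 < l) ∨ ((k + 2) % l = 0 ∧ k + 2 = l) ∨
      ((k + 2) % l = 1 ∧ k + 1 = l) := by
  rcases Nat.lt_or_ge (k + 2) l with h | h
  · exact Or.inl ⟨Nat.mod_eq_of_lt h, h⟩
  · rcases Nat.eq_or_lt_of_le h with h' | h'
    · exact Or.inr (Or.inl ⟨by rw [← h', Nat.mod_self], h'.symm⟩)
    · have hk1 : k + 1 = l := by omega
      refine Or.inr (Or.inr ⟨?_, hk1⟩)
      have : k + 2 = l + 1 := by omega
      rw [this, Nat.add_mod_left, Nat.mod_eq_of_lt (by omega)]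

lemma mem_W {l k m : ℕ} : m ∈ W l k ↔ m = k ∨ m = (k + 1) % l ∨ m = (k + 2) % l := by
  simp [W]

lemma W_subset_range {l k : ℕ} (hl : 3 ≤ l) (hk : k < l) : W l k ⊆ range l := by
  intro m hm
  rw [mem_W] at hm
  rcases mod1 hk with ⟨h1, _⟩ | ⟨h1, _⟩ <;> rcases mod2 hl hk with ⟨h2, _⟩ | ⟨h2, _⟩ | ⟨h2, _⟩ <;>
    rw [mem_range] <;> omega

lemma W_inj {l k k' : ℕ} (hl : 6 ≤ l) (hk : k < l) (hk' : k' < l) (h : W l k = W l k') :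
    k = k' := by
  have h1 : k ∈ W l k' := h ▸ (by rw [mem_W]; tauto)
  have h2 : k' ∈ W l k := h.symm ▸ (by rw [mem_W]; tauto)
  have h3 : (k + 1) % l ∈ W l k' := h ▸ (by rw [mem_W]; tauto)
  have h4 : (k + 2) % l ∈ W l k' := h ▸ (by rw [mem_W]; tauto)
  rw [mem_W] at h1 h2 h3 h4
  rcases mod1 hk with ⟨e1, f1⟩ | ⟨e1, f1⟩ <;> rcases mod2 (by omega) hk with ⟨e2, f2⟩ | ⟨e2, f2⟩ | ⟨e2, f2⟩ <;>
    rcases mod1 hk' with ⟨e3, f3⟩ | ⟨e3, f3⟩ <;> rcases mod2 (by omega) hk' with ⟨e4, f4⟩ | ⟨e4, f4⟩ | ⟨e4, f4⟩ <;>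
    omega

lemma W_card {l k : ℕ} (hl : 6 ≤ l) (hk : k < l) : (W l k).card = 3 := by
  rcases mod1 hk with ⟨e1, f1⟩ | ⟨e1, f1⟩ <;> rcases mod2 (by omega) hk with ⟨e2, f2⟩ | ⟨e2, f2⟩ | ⟨e2, f2⟩ <;>
  · rw [W, card_insert_of_notMem (by simp; omega), card_insert_of_notMem (by simp; omega),
      card_singleton]

lemma near_of_covered {l p q : ℕ} (hl : 6 ≤ l) (hp : p < l) (hq : q < l)
    (h : ∃ k < l, p ∈ W l k ∧ q ∈ W l k) :
    (p ≤ q + 2 ∧ q ≤ p + 2) ∨ p + l ≤ q + 2 ∨ q + l ≤ p + 2 := by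
  obtain ⟨a, ha, ha1, ha2⟩ := h
  rw [mem_W] at ha1 ha2
  rcases mod1 ha with ⟨e1, f1⟩ | ⟨e1, f1⟩ <;>
    rcases mod2 (by omega) ha with ⟨e2, f2⟩ | ⟨e2, f2⟩ | ⟨e2, f2⟩ <;> omega

lemma mem_W_of_covered {l p m : ℕ} (hl : 6 ≤ l) (hp : p < l) (hm : m < l)
    (h1 : ∃ k < l, p ∈ W l k ∧ m ∈ W l k)
    (h2 : ∃ k < l, p ∈ W l k ∧ (m + 1) % l ∈ W l k)
    (h3 : ∃ k < l, p ∈ W l k ∧ (m + 2) % l ∈ W l k) : p ∈ W l m := by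
  have hm1 : (m + 1) % l < l := Nat.mod_lt _ (by omega)
  have hm2 : (m + 2) % l < l := Nat.mod_lt _ (by omega)
  have n1 := near_of_covered hl hp hm h1
  have n2 := near_of_covered hl hp hm1 h2
  have n3 := near_of_covered hl hp hm2 h3
  rw [mem_W]
  rcases mod1 hm with ⟨e7, f7⟩ | ⟨e7, f7⟩ <;>
    rcases mod2 (by omega) hm with ⟨e8, f8⟩ | ⟨e8, f8⟩ | ⟨e8, f8⟩ <;> omega



lemma main {l : ℕ} (hl : 6 ≤ l) : ∀ n (x : ℕ → ℝ), (∀ m ∈ range l, 0 ≤ x m) →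
    (((range l).filter (fun m => x m ≠ 0)).card ≤ n) →
    F l x ≤ (∑ m ∈ range l, x m) ^ 3 / 27 := by
  intro n
  induction n with
  | zero =>
    intro x hx hc
    have hall : ∀ m ∈ range l, x m = 0 := by
      intro m hm
      by_contra h
      have : m ∈ (range l).filter (fun m => x m ≠ 0) := Finset.mem_filter.2 ⟨hm, h⟩
      rw [Finset.card_eq_zero.1 (Nat.le_zero.1 hc)] at this
      exact absurd this (Finset.notMem_empty m)
    have hF : F l x = 0 := by
      refine Finset.sum_eq_zero fun k hk => ?_
      have hkW : k ∈ W l k := by rw [W]; exact mem_insert_self _ _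
      exact Finset.prod_eq_zero hkW (hall k hk)
    rw [hF, Finset.sum_eq_zero hall]
    norm_num
  | succ n IH =>
    intro x hx hc
    set P := (range l).filter (fun m => x m ≠ 0) with hP
    by_cases hpair : ∃ i ∈ P, ∃ j ∈ P, ∀ k ∈ range l, ¬(i ∈ W l k ∧ j ∈ W l k)
    · obtain ⟨i, hiP, j, hjP, hk⟩ := hpair
      have hiP' := Finset.mem_filter.1 hiP
      have hjP' := Finset.mem_filter.1 hjP
      have hcard' : ∀ j' ∈ P, (P.erase j').card ≤ n := by
        intro j' hj'
        rw [Finset.card_erase_of_mem hj']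
        omega
      rcases le_total
        (∑ k ∈ (range l).filter (fun k => j ∈ W l k), ∏ m ∈ (W l k).erase j, x m)
        (∑ k ∈ (range l).filter (fun k => i ∈ W l k), ∏ m ∈ (W l k).erase i, x m) with hAB | hAB
      · obtain ⟨x', hx'1, hx'2, hx'3, hx'4⟩ :=
          step hl x hx hiP'.1 hjP'.1 hiP'.2 hjP'.2 hk hAB
        calc F l x ≤ F l x' := hx'3
          _ ≤ (∑ m ∈ range l, x' m) ^ 3 / 27 :=
            IH x' hx'1 (le_trans (Finset.card_le_card hx'4) (hcard' j hjP))
          _ = (∑ m ∈ range l, x m) ^ 3 / 27 := by rw [hx'2]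
      · obtain ⟨x', hx'1, hx'2, hx'3, hx'4⟩ :=
          step hl x hx hjP'.1 hiP'.1 hjP'.2 hiP'.2
            (fun k hk' h => hk k hk' ⟨h.2, h.1⟩) hAB
        calc F l x ≤ F l x' := hx'3
          _ ≤ (∑ m ∈ range l, x' m) ^ 3 / 27 :=
            IH x' hx'1 (le_trans (Finset.card_le_card hx'4) (hcard' i hiP))
          _ = (∑ m ∈ range l, x m) ^ 3 / 27 := by rw [hx'2]
    · push_neg at hpair
      have hS0 : 0 ≤ ∑ m ∈ range l, x m := Finset.sum_nonneg hx
      have hzero : ∀ k ∈ range l, ¬ (W l k ⊆ P) → ∏ m ∈ W l k, x m = 0 := by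
        intro k hk hne
        obtain ⟨v, hv, hvP⟩ := Finset.not_subset.1 hne
        have hvr : v ∈ range l := W_subset_range (by omega) (mem_range.1 hk) hv
        have : x v = 0 := by
          by_contra h
          exact hvP (Finset.mem_filter.2 ⟨hvr, h⟩)
        exact Finset.prod_eq_zero hv this
      by_cases hw : ∃ m ∈ range l, W l m ⊆ P
      · obtain ⟨m, hm, hsub⟩ := hw
        have hml := mem_range.1 hm
        have hm1P : (m + 1) % l ∈ P := hsub (by rw [mem_W]; tauto)
        have hm2P : (m + 2) % l ∈ P := hsub (by rw [mem_W]; tauto)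
        have hmP : m ∈ P := hsub (by rw [mem_W]; tauto)
        have hPsub : P ⊆ W l m := by
          intro p hp
          have hpl := mem_range.1 (Finset.mem_filter.1 hp).1
          have c1 := hpair p hp m hmP
          have c2 := hpair p hp _ hm1P
          have c3 := hpair p hp _ hm2P
          refine mem_W_of_covered hl hpl hml ?_ ?_ ?_
          · obtain ⟨k, hk1, hk2⟩ := c1; exact ⟨k, mem_range.1 hk1, hk2⟩
          · obtain ⟨k, hk1, hk2⟩ := c2; exact ⟨k, mem_range.1 hk1, hk2⟩
          · obtain ⟨k, hk1, hk2⟩ := c3; exact ⟨k, mem_range.1 hk1, hk2⟩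
        have hFeq : F l x = ∏ v ∈ W l m, x v := by
          refine Finset.sum_eq_single_of_mem m hm fun k hk hkm => ?_
          refine hzero k hk fun hsub' => ?_
          have : W l k = W l m :=
            Finset.eq_of_subset_of_card_le (hsub'.trans hPsub)
              (by rw [W_card hl (mem_range.1 hk), W_card hl hml])
          exact hkm (W_inj hl (mem_range.1 hk) hml this)
        -- expand the product
        have hd12 : (m + 1) % l ≠ (m + 2) % l := by
          rcases mod1 hml with ⟨e1, f1⟩ | ⟨e1, f1⟩ <;>
            rcases mod2 (by omega) hml with ⟨e2, f2⟩ | ⟨e2, f2⟩ | ⟨e2, f2⟩ <;> omega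
        have hd01 : m ≠ (m + 1) % l := by
          rcases mod1 hml with ⟨e1, f1⟩ | ⟨e1, f1⟩ <;> omega
        have hd02 : m ≠ (m + 2) % l := by
          rcases mod2 (by omega) hml with ⟨e2, f2⟩ | ⟨e2, f2⟩ | ⟨e2, f2⟩ <;> omega
        have hprod : ∏ v ∈ W l m, x v = x m * (x ((m + 1) % l) * x ((m + 2) % l)) := by
          rw [W, Finset.prod_insert (by simp [hd01, hd02]),
            Finset.prod_insert (by simp [hd12]), Finset.prod_singleton]
        have hsum3 : x m + (x ((m + 1) % l) + x ((m + 2) % l)) ≤ ∑ v ∈ range l, x v := by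
          have : ∑ v ∈ W l m, x v = x m + (x ((m + 1) % l) + x ((m + 2) % l)) := by
            rw [W, Finset.sum_insert (by simp [hd01, hd02]),
              Finset.sum_insert (by simp [hd12]), Finset.sum_singleton]
          rw [← this]
          exact Finset.sum_le_sum_of_subset_of_nonneg (W_subset_range (by omega) hml)
            (fun v hv _ => hx v hv)
        have ha : 0 ≤ x m := hx m hm
        have hb : 0 ≤ x ((m + 1) % l) :=
          hx _ (W_subset_range (by omega) hml (by rw [mem_W]; tauto))
        have hc2 : 0 ≤ x ((m + 2) % l) :=
          hx _ (W_subset_range (by omega) hml (by rw [mem_W]; tauto))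
        rw [hFeq, hprod]
        set a := x m
        set b := x ((m + 1) % l)
        set c := x ((m + 2) % l)
        set S := ∑ v ∈ range l, x v
        have h27 : 27 * (a * (b * c)) ≤ (a + (b + c)) ^ 3 := by
          nlinarith [mul_nonneg ha hb, mul_nonneg hb hc2, mul_nonneg ha hc2,
            mul_nonneg (mul_nonneg ha hb) hc2, sq_nonneg (a - b), sq_nonneg (b - c),
            sq_nonneg (a - c), mul_nonneg ha (sq_nonneg (b - c)),
            mul_nonneg hb (sq_nonneg (a - c)), mul_nonneg hc2 (sq_nonneg (a - b))]
        have hcube : (a + (b + c)) ^ 3 ≤ S ^ 3 :=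
          pow_le_pow_left₀ (by linarith) hsum3 3
        linarith
      · push_neg at hw
        have hF : F l x = 0 :=
          Finset.sum_eq_zero fun k hk => hzero k hk (hw k hk)
        rw [hF]
        positivity

end TC

open TC

/-- For ℓ = 3 or ℓ ≥ 6, the 3-uniform tight cycle of length ℓ has
Lagrangian 2/9, i.e., (1/6)·Λ = 1/27. -/
theorem lagrangian_tight_cycle_other (l : ℕ) (hl : l = 3 ∨ 6 ≤ l) (C : ThreeGraph)
    (hV : C.verts = Finset.range l)
    (hE : ∀ e : Finset ℕ, e ∈ C.edges ↔
      ∃ i < l, e = ({i, (i + 1) % l, (i + 2) % l} : Finset ℕ)) :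
    lagrangian C = 2 / 9 ∧ (1 / 6 : ℝ) * lagrangian C = 1 / 27 := by
  have hl3 : 3 ≤ l := by rcases hl with h | h <;> omega
  -- the witness weighting
  set x₀ : ℕ → ℝ := fun v => if v < 3 then (1/3 : ℝ) else 0 with hx₀def
  have hx₀01 : ∀ v ∈ C.verts, 0 ≤ x₀ v ∧ x₀ v ≤ 1 := by
    intro v _
    simp only [hx₀def]
    split <;> norm_num
  have hx₀sum : ∑ v ∈ C.verts, x₀ v = 1 := by
    rw [hV]
    have hsub : range 3 ⊆ range l := by
      intro v hv; rw [mem_range] at hv ⊢; omega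
    rw [← Finset.sum_subset hsub (fun v hv hnv => by
      simp only [hx₀def]
      rw [mem_range] at hnv
      rw [if_neg (by omega)])]
    simp [Finset.sum_range_succ, hx₀def]
    norm_num
  have h012mem : ({0, 1, 2} : Finset ℕ) ∈ C.edges := by
    rw [hE]
    refine ⟨0, by omega, ?_⟩
    have h1 : (0 + 1) % l = 1 := Nat.mod_eq_of_lt (by omega)
    have h2 : (0 + 2) % l = 2 := Nat.mod_eq_of_lt (by omega)
    rw [h1, h2]
  have hx₀val : lagrangePoly C x₀ = 2/9 := by
    rw [lagrangePoly]
    have hsingle : ∑ e ∈ C.edges, ∏ v ∈ e, x₀ v = ∏ v ∈ ({0, 1, 2} : Finset ℕ), x₀ v := by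
      refine Finset.sum_eq_single_of_mem _ h012mem fun e he hne => ?_
      obtain ⟨i, hi, rfl⟩ := (hE e).1 he
      rcases hl with hl' | hl'
      · subst hl'
        exact absurd (by interval_cases i <;> decide) hne
      · have hbig : ∃ v ∈ ({i, (i + 1) % l, (i + 2) % l} : Finset ℕ), 3 ≤ v := by
          by_contra hcon
          push_neg at hcon
          have c0 := hcon i (Finset.mem_insert_self _ _)
          have c1 := hcon ((i + 1) % l) (by simp)
          have c2 := hcon ((i + 2) % l) (by simp)
          rcases mod1 hi with ⟨e1, f1⟩ | ⟨e1, f1⟩ <;>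
            rcases mod2 hl3 hi with ⟨e2, f2⟩ | ⟨e2, f2⟩ | ⟨e2, f2⟩
          all_goals {
            apply hne
            have hii : i = 0 := by omega
            have h1 : (i + 1) % l = 1 := by omega
            have h2 : (i + 2) % l = 2 := by omega
            rw [hii] at h1 h2 ⊢
            rw [h1, h2] }
        obtain ⟨v, hv, h3v⟩ := hbig
        refine Finset.prod_eq_zero hv ?_
        simp only [hx₀def]
        rw [if_neg (by omega)]
    rw [hsingle]
    rw [Finset.prod_insert (by decide), Finset.prod_insert (by decide),
      Finset.prod_singleton]
    simp only [hx₀def]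
    norm_num
  -- upper bound
  have hub : ∀ x : ℕ → ℝ, (∀ v ∈ C.verts, 0 ≤ x v ∧ x v ≤ 1) →
      (∑ v ∈ C.verts, x v = 1) → lagrangePoly C x ≤ 2/9 := by
    intro x hx01 hsum
    rw [hV] at hx01 hsum
    rcases hl with hl' | hl'
    · subst hl'
      have hedges : C.edges = {({0, 1, 2} : Finset ℕ)} := by
        ext e
        rw [Finset.mem_singleton, hE]
        constructor
        · rintro ⟨i, hi, rfl⟩
          interval_cases i <;> decide
        · rintro rfl
          exact ⟨0, by omega, by decide⟩
      rw [lagrangePoly, hedges, Finset.sum_singleton,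
        Finset.prod_insert (by decide), Finset.prod_insert (by decide),
        Finset.prod_singleton]
      have h0 := (hx01 0 (by decide)).1
      have h1 := (hx01 1 (by decide)).1
      have h2 := (hx01 2 (by decide)).1
      have hs : x 0 + x 1 + x 2 = 1 := by
        have := hsum
        simp [Finset.sum_range_succ] at this
        linarith
      nlinarith [mul_nonneg h0 h1, mul_nonneg h1 h2, mul_nonneg h0 h2,
        mul_nonneg (mul_nonneg h0 h1) h2, mul_nonneg h0 (sq_nonneg (x 1 - x 2)),
        mul_nonneg h1 (sq_nonneg (x 0 - x 2)), mul_nonneg h2 (sq_nonneg (x 0 - x 1))]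
    · have hedges : C.edges = (range l).image (fun k => W l k) := by
        ext e
        rw [hE, Finset.mem_image]
        constructor
        · rintro ⟨i, hi, rfl⟩
          exact ⟨i, mem_range.2 hi, rfl⟩
        · rintro ⟨i, hi, rfl⟩
          exact ⟨i, mem_range.1 hi, rfl⟩
      have hinj : ∀ a ∈ range l, ∀ b ∈ range l, W l a = W l b → a = b :=
        fun a ha b hb h => W_inj hl' (mem_range.1 ha) (mem_range.1 hb) h
      rw [lagrangePoly, hedges, Finset.sum_image hinj]
      have hF : F l x ≤ (∑ m ∈ range l, x m) ^ 3 / 27 :=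
        main hl' _ x (fun m hm => (hx01 m hm).1) le_rfl
      rw [hsum] at hF
      rw [F] at hF
      norm_num at hF
      linarith
  have hkey : lagrangian C = 2/9 := by
    rw [lagrangian]
    apply le_antisymm
    · refine csSup_le ⟨2/9, x₀, hx₀01, hx₀sum, hx₀val.symm⟩ ?_
      rintro y ⟨x, hx01, hsum, rfl⟩
      exact hub x hx01 hsum
    · refine le_csSup ⟨2/9, ?_⟩ ⟨x₀, hx₀01, hx₀sum, hx₀val.symm⟩
      rintro y ⟨x, hx01, hsum, rfl⟩
      exact hub x hx01 hsum
  refine ⟨hkey, by rw [hkey]; norm_num⟩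
end

section
/- Let F_{3,2} be the 3-graph with vertex set {1,2,3,4,5} and edges {1,2,3}, {1,4,5}, {2,4,5}, {3,4,5}. Then (1/6)·Λ_{F_{3,2}} = (5√5 + 63)/1922. -/
open Finset

theorem key_ub (a b c d e : ℝ) (ha : 0 ≤ a) (hb : 0 ≤ b) (hc : 0 ≤ c) (hd : 0 ≤ d) (he : 0 ≤ e)
    (hs : a + b + c + d + e = 1) :
    a*b*c + (a+b+c)*d*e ≤ (5 * Real.sqrt 5 + 63) / 1922 := by
  set r := Real.sqrt 5 with hr
  have hr2 : r ^ 2 = 5 := Real.sq_sqrt (by norm_num)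
  have hrl : 2 ≤ r := by nlinarith [Real.sqrt_nonneg 5]
  have hru : r ≤ 9/4 := by nlinarith [Real.sqrt_nonneg 5]
  set s := a + b + c with hsdef
  have hs0 : 0 ≤ s := by positivity
  have hs1 : s ≤ 1 := by nlinarith
  have h1 : d * e ≤ ((1 - s)/2)^2 := by nlinarith [sq_nonneg (d - e)]
  have h2 : a * b * c ≤ (s/3)^3 := by
    nlinarith [mul_nonneg ha (sq_nonneg (b - c)), mul_nonneg hb (sq_nonneg (a - c)),
      mul_nonneg hc (sq_nonneg (a - b)), mul_nonneg (mul_nonneg ha hb) hc,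
      sq_nonneg (a - b), sq_nonneg (b - c), sq_nonneg (a - c)]
  have hid : (5 * r + 63) / 1922 - ((s/3)^3 + s * ((1-s)/2)^2) =
      (31/108) * (s - (18 - 3*r)/31)^2 * ((18 + 6*r)/31 - s) := by
    linear_combination (-(31*s + 2*r - 18)/3844) * hr2
  have h3 : (s/3)^3 + s * ((1-s)/2)^2 ≤ (5 * r + 63) / 1922 := by
    nlinarith [mul_nonneg (mul_nonneg (by norm_num : (0:ℝ) ≤ 31/108)
      (sq_nonneg (s - (18 - 3*r)/31))) (by nlinarith : (0:ℝ) ≤ (18 + 6*r)/31 - s)]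
  nlinarith [h1, h2, h3, hs0]

theorem sum_edges_eval (x : ℕ → ℝ) :
    (∑ e ∈ ({{1, 2, 3}, {1, 4, 5}, {2, 4, 5}, {3, 4, 5}} : Finset (Finset ℕ)), ∏ v ∈ e, x v)
    = x 1 * x 2 * x 3 + (x 1 + x 2 + x 3) * (x 4 * x 5) := by
  rw [Finset.sum_insert (by decide), Finset.sum_insert (by decide),
    Finset.sum_insert (by decide), Finset.sum_singleton]
  repeat rw [Finset.prod_insert (by decide)]
  simp only [Finset.prod_singleton]
  ring

theorem sum_verts_eval (x : ℕ → ℝ) :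
    (∑ v ∈ ({1,2,3,4,5} : Finset ℕ), x v) = x 1 + x 2 + x 3 + x 4 + x 5 := by
  repeat rw [Finset.sum_insert (by decide)]
  rw [Finset.sum_singleton]
  ring


/-- For the 3-graph F_{3,2} on {1,…,5} with edges 123, 145, 245, 345, we
have (1/6)·Λ_{F_{3,2}} = (5√5 + 63)/1922. -/
theorem lagrangian_F32 (F : ThreeGraph)
    (hV : F.verts = ({1, 2, 3, 4, 5} : Finset ℕ))
    (hE : F.edges = ({{1, 2, 3}, {1, 4, 5}, {2, 4, 5}, {3, 4, 5}} : Finset (Finset ℕ))) :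
    (1 / 6 : ℝ) * lagrangian F = (5 * Real.sqrt 5 + 63) / 1922 := by
  set r := Real.sqrt 5 with hr
  have hr2 : r ^ 2 = 5 := Real.sq_sqrt (by norm_num)
  have hrl : 2 ≤ r := by nlinarith [Real.sqrt_nonneg 5]
  have hru : r ≤ 9/4 := by nlinarith [Real.sqrt_nonneg 5]
  have key : lagrangian F = 6 * ((5 * r + 63) / 1922) := by
    apply IsGreatest.csSup_eq
    constructor
    · -- membership via optimal witness
      refine ⟨fun n => if n ≤ 3 then (18 - 3*r)/93 else (13 + 3*r)/62, ?_, ?_, ?_⟩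
      · intro v hv
        rw [hV] at hv
        fin_cases hv <;> norm_num <;> constructor <;> nlinarith
      · rw [hV, sum_verts_eval]
        norm_num
        ring
      · unfold lagrangePoly
        rw [hE, sum_edges_eval]
        norm_num
        linear_combination (r/3844) * hr2
    · rintro l ⟨x, hx, hsum, rfl⟩
      rw [hV] at hx hsum
      rw [sum_verts_eval] at hsum
      have h1 := hx 1 (by decide)
      have h2 := hx 2 (by decide)
      have h3 := hx 3 (by decide)
      have h4 := hx 4 (by decide)
      have h5 := hx 5 (by decide)
      unfold lagrangePoly
      rw [hE, sum_edges_eval]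
      have := key_ub (x 1) (x 2) (x 3) (x 4) (x 5) h1.1 h2.1 h3.1 h4.1 h5.1 hsum
      rw [← hr] at this
      linarith
  rw [key]; ring
end
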